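/- arXiv:1011.3977 — 3 statements merged into one kernel-verified Lean document; each statement's English description precedes it below -/
import Mathlib

section
/- For a conformal metric h = Ψ·Σₖ(dxᵏ)² with Levi-Civita connection ∇, a 1-form A satisfies the system ∇ᵢAᵢ = ∇ⱼAⱼ (all i,j) and ∇ᵢAⱼ + ∇ⱼAᵢ = 0 (i ≠ j) if and only if ∂ᵢ(Aᵢ/Ψ) = ∂ⱼ(Aⱼ/Ψ) for all i,j and ∂ᵢ(Aⱼ/Ψ) + ∂ⱼ(Aᵢ/Ψ) = 0 for i ≠ j. -/
noncomputable section
open scoped BigOperators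

variable {ι : Type*} [Fintype ι] [DecidableEq ι]

/-- Partial derivative in the `i`-th coordinate direction. -/
def pd (i : ι) (f : (ι → ℝ) → ℝ) (x : ι → ℝ) : ℝ :=
  fderiv ℝ f x (Pi.single i 1)

/-- Christoffel symbols of the Levi-Civita connection of a metric `g` with inverse `ginv`:
`Γᵏᵢⱼ = (1/2) Σₗ gᵏˡ (∂ᵢ g_{jl} + ∂ⱼ g_{il} − ∂ₗ g_{ij})`. -/
def christoffel (g ginv : (ι → ℝ) → ι → ι → ℝ) (k i j : ι) (x : ι → ℝ) : ℝ :=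
  (1/2) * ∑ l, ginv x k l *
    (pd i (fun y => g y j l) x + pd j (fun y => g y i l) x - pd l (fun y => g y i j) x)

/-- Curvature tensor `R^l_{k i j}`, the `∂_l`-component of `R(∂_i,∂_j)∂_k`. -/
def riemann (g ginv : (ι → ℝ) → ι → ι → ℝ) (l k i j : ι) (x : ι → ℝ) : ℝ :=
  pd i (christoffel g ginv l j k) x - pd j (christoffel g ginv l i k) x
  + ∑ m, christoffel g ginv l i m x * christoffel g ginv m j k x
  - ∑ m, christoffel g ginv l j m x * christoffel g ginv m i k x

/-- Ricci tensor `Ric_{kj} = R^l_{k l j}`. -/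
def ricci (g ginv : (ι → ℝ) → ι → ι → ℝ) (k j : ι) (x : ι → ℝ) : ℝ :=
  ∑ l, riemann g ginv l k l j x

/-- Scalar curvature `s = Σ gᵏʲ Ric_{kj}`. -/
def scalarCurv (g ginv : (ι → ℝ) → ι → ι → ℝ) (x : ι → ℝ) : ℝ :=
  ∑ k, ∑ j, ginv x k j * ricci g ginv k j x

/-- Lowered curvature tensor `R_{ijkl} = g(R(∂_i,∂_j)∂_k, ∂_l)`. -/
def riemannLow (g ginv : (ι → ℝ) → ι → ι → ℝ) (i j k l : ι) (x : ι → ℝ) : ℝ :=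
  ∑ m, g x l m * riemann g ginv m k i j x

/-- Schouten tensor `L = (1/(d−2))(Ric − s/(2(d−1)) g)`. -/
def schouten (g ginv : (ι → ℝ) → ι → ι → ℝ) (i j : ι) (x : ι → ℝ) : ℝ :=
  (1/((Fintype.card ι : ℝ) - 2)) *
    (ricci g ginv i j x - scalarCurv g ginv x / (2*((Fintype.card ι : ℝ) - 1)) * g x i j)

/-- Weyl conformal curvature tensor (all indices lowered):
`W = R + R_L` where `R_L(X,Y) = LX∧Y + X∧LY` is built from the Schouten tensor. -/
def weyl (g ginv : (ι → ℝ) → ι → ι → ℝ) (i j k l : ι) (x : ι → ℝ) : ℝ :=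
  riemannLow g ginv i j k l x
  + (schouten g ginv i k x * g x j l - g x j k * schouten g ginv i l x
     + g x i k * schouten g ginv j l x - schouten g ginv j k x * g x i l)

/-- The conformal metric `h_{ij} = Ψ δ_{ij}`. -/
def confMetric {n : ℕ} (Ψ : (Fin n → ℝ) → ℝ) (y : Fin n → ℝ) (a b : Fin n) : ℝ :=
  Ψ y * (if a = b then (1:ℝ) else 0)

/-- Its inverse `hⁱʲ = Ψ⁻¹ δ_{ij}`. -/
def confMetricInv {n : ℕ} (Ψ : (Fin n → ℝ) → ℝ) (y : Fin n → ℝ) (a b : Fin n) : ℝ :=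
  (Ψ y)⁻¹ * (if a = b then (1:ℝ) else 0)

/-- Covariant derivative `∇ᵢAⱼ = ∂ᵢAⱼ − Σₖ Γᵏᵢⱼ Aₖ` of a 1-form for the metric `Ψ·Σ(dxᵏ)²`. -/
def covA {n : ℕ} (Ψ : (Fin n → ℝ) → ℝ) (A : Fin n → (Fin n → ℝ) → ℝ)
    (i j : Fin n) (x : Fin n → ℝ) : ℝ :=
  pd i (A j) x - ∑ k, christoffel (confMetric Ψ) (confMetricInv Ψ) k i j x * A k x

lemma pd_confMetric {n : ℕ} (Ψ : (Fin n → ℝ) → ℝ) (i a b : Fin n) (x : Fin n → ℝ) :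
    pd i (fun y => confMetric Ψ y a b) x = (if a = b then 1 else 0) * pd i Ψ x := by
  unfold confMetric
  by_cases h : a = b <;> simp [h, pd]

lemma christoffel_conf {n : ℕ} (Ψ : (Fin n → ℝ) → ℝ) (k i j : Fin n) (x : Fin n → ℝ) :
    christoffel (confMetric Ψ) (confMetricInv Ψ) k i j x =
      (1/2) * (Ψ x)⁻¹ *
        ((if j = k then pd i Ψ x else 0) + (if i = k then pd j Ψ x else 0)
          - (if i = j then pd k Ψ x else 0)) := by
  unfold christoffel
  rw [Finset.sum_eq_single k]
  · simp only [pd_confMetric, confMetricInv]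
    by_cases h1 : j = k <;> by_cases h2 : i = k <;> by_cases h3 : i = j <;>
      simp [h1, h2, h3] <;> ring
  · intro l _ hl
    simp [confMetricInv, Ne.symm hl]
  · simp

lemma covA_eq {n : ℕ} (Ψ : (Fin n → ℝ) → ℝ) (A : Fin n → (Fin n → ℝ) → ℝ)
    (i j : Fin n) (x : Fin n → ℝ) :
    covA Ψ A i j x = pd i (A j) x - (1/2) * (Ψ x)⁻¹ *
      (pd i Ψ x * A j x + pd j Ψ x * A i x
        - (if i = j then ∑ k, pd k Ψ x * A k x else 0)) := by
  unfold covA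
  simp only [christoffel_conf]
  congr 1
  by_cases h : i = j
  · subst h
    simp only [if_pos rfl, if_true, mul_sub, mul_add, sub_mul, add_mul, ite_mul, zero_mul,
      mul_ite, mul_zero, Finset.sum_sub_distrib, Finset.sum_add_distrib, Finset.sum_ite_eq,
      Finset.mem_univ, if_pos, Finset.mul_sum]
    ring_nf
  · simp only [if_neg h, sub_zero, mul_add, add_mul, ite_mul, zero_mul, mul_ite, mul_zero,
      Finset.sum_add_distrib, Finset.sum_ite_eq, Finset.mem_univ, if_pos]
    ring

/-- derivative of a quotient -/
lemma pd_div (f g : (Fin n → ℝ) → ℝ) (i : Fin n) (x : Fin n → ℝ)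
    (hf : DifferentiableAt ℝ f x) (hg : DifferentiableAt ℝ g x) (hne : g x ≠ 0) :
    pd i (fun y => f y / g y) x =
      (pd i f x * g x - f x * pd i g x) / (g x)^2 := by
  have hg' := hg.hasFDerivAt
  have hinv : HasFDerivAt (fun y => (g y)⁻¹)
      ((ContinuousLinearMap.smulRight (1 : ℝ →L[ℝ] ℝ) (-((g x)^2)⁻¹)).comp (fderiv ℝ g x)) x :=
    (hasFDerivAt_inv hne).comp x hg'
  have hmul := hf.hasFDerivAt.mul hinv
  have heq : (fun y => f y / g y) = fun y => f y * (g y)⁻¹ := by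
    funext y; rw [div_eq_mul_inv]
  unfold pd
  rw [heq, show (fun y => f y * (g y)⁻¹) = f * fun y => (g y)⁻¹ from rfl, hmul.fderiv]
  simp only [ContinuousLinearMap.add_apply, ContinuousLinearMap.smul_apply,
    ContinuousLinearMap.comp_apply, ContinuousLinearMap.smulRight_apply,
    ContinuousLinearMap.one_apply, smul_eq_mul]
  field_simp
  ring

/-- for the conformal metric `h = Ψ·Σ(dxᵏ)²`, a 1-form `A` satisfies
`∇ᵢAᵢ = ∇ⱼAⱼ` and `∇ᵢAⱼ + ∇ⱼAᵢ = 0` (`i ≠ j`) iff `∂ᵢ(Aᵢ/Ψ) = ∂ⱼ(Aⱼ/Ψ)` and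
`∂ᵢ(Aⱼ/Ψ) + ∂ⱼ(Aᵢ/Ψ) = 0` (`i ≠ j`). -/
theorem stmt7 {n : ℕ} (hn : 2 ≤ n) (U : Set (Fin n → ℝ)) (hU : IsOpen U)
    (Ψ : (Fin n → ℝ) → ℝ) (hΨ : ContDiffOn ℝ (⊤ : ℕ∞) Ψ U) (hpos : ∀ x ∈ U, 0 < Ψ x)
    (A : Fin n → (Fin n → ℝ) → ℝ) (hA : ∀ i, ContDiffOn ℝ (⊤ : ℕ∞) (A i) U) :
    ((∀ (i j : Fin n), ∀ x ∈ U, covA Ψ A i i x = covA Ψ A j j x) ∧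
     (∀ (i j : Fin n), i ≠ j → ∀ x ∈ U, covA Ψ A i j x + covA Ψ A j i x = 0))
    ↔
    ((∀ (i j : Fin n), ∀ x ∈ U,
        pd i (fun y => A i y / Ψ y) x = pd j (fun y => A j y / Ψ y) x) ∧
     (∀ (i j : Fin n), i ≠ j → ∀ x ∈ U,
        pd i (fun y => A j y / Ψ y) x + pd j (fun y => A i y / Ψ y) x = 0)) := by
  have key : ∀ x ∈ U, (∀ i j : Fin n, covA Ψ A i i x - covA Ψ A j j x
        = Ψ x * (pd i (fun y => A i y / Ψ y) x - pd j (fun y => A j y / Ψ y) x)) ∧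
      (∀ i j : Fin n, i ≠ j → covA Ψ A i j x + covA Ψ A j i x
        = Ψ x * (pd i (fun y => A j y / Ψ y) x + pd j (fun y => A i y / Ψ y) x)) := by
    intro x hx
    have hΨd : DifferentiableAt ℝ Ψ x := (hΨ.contDiffAt (hU.mem_nhds hx)).differentiableAt (by simp)
    have hAd : ∀ j, DifferentiableAt ℝ (A j) x := fun j =>
      ((hA j).contDiffAt (hU.mem_nhds hx)).differentiableAt (by simp)
    have hne : Ψ x ≠ 0 := (hpos x hx).ne'
    constructor
    · intro i j
      rw [covA_eq, covA_eq, pd_div _ _ _ _ (hAd i) hΨd hne, pd_div _ _ _ _ (hAd j) hΨd hne]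
      simp only [if_pos rfl]
      field_simp
      ring
    · intro i j hij
      rw [covA_eq, covA_eq, pd_div _ _ _ _ (hAd j) hΨd hne, pd_div _ _ _ _ (hAd i) hΨd hne]
      simp only [if_neg hij, if_neg (Ne.symm hij)]
      field_simp
      ring
  constructor
  · rintro ⟨h1, h2⟩
    refine ⟨fun i j x hx => ?_, fun i j hij x hx => ?_⟩
    · have hk := (key x hx).1 i j
      rw [h1 i j x hx, sub_self] at hk
      have hne : Ψ x ≠ 0 := (hpos x hx).ne'
      have h0 := (mul_eq_zero.mp hk.symm).resolve_left hne
      exact sub_eq_zero.mp h0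
    · have hk := (key x hx).2 i j hij
      rw [h2 i j hij x hx] at hk
      have hne : Ψ x ≠ 0 := (hpos x hx).ne'
      exact (mul_eq_zero.mp hk.symm).resolve_left hne
  · rintro ⟨h1, h2⟩
    refine ⟨fun i j x hx => ?_, fun i j hij x hx => ?_⟩
    · have hk := (key x hx).1 i j
      rw [h1 i j x hx, sub_self, mul_zero] at hk
      linarith
    · have hk := (key x hx).2 i j hij
      rw [h2 i j hij x hx, mul_zero] at hk
      exact hk
end
end

section
/- Let (M,g) be a conformally flat pseudo-Riemannian manifold of dimension d ≥ 4 that is locally a product (M₁×M₂, g₁+g₂) with dim M₁ = d₁ ≥ 2 and dim M₂ = d₂ ≥ 2. Then the scalar curvatures s₁, s₂ are constant and satisfy s₁/(d₁(d₁−1)) = −s₂/(d₂(d₂−1)); moreover each factor has constant sectional curvature, with curvatures k₁ = −k₂. -/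
set_option maxHeartbeats 1000000
set_option linter.unusedSectionVars false
noncomputable section
open scoped BigOperators

variable {ι : Type*} [Fintype ι] [DecidableEq ι]

/-- The product metric `g₁ + g₂` on `ℝ^{d₁} × ℝ^{d₂}`, with index set `Fin d₁ ⊕ Fin d₂`. -/
def prodMetric {d₁ d₂ : ℕ} (g₁ : (Fin d₁ → ℝ) → Fin d₁ → Fin d₁ → ℝ)
    (g₂ : (Fin d₂ → ℝ) → Fin d₂ → Fin d₂ → ℝ)
    (p : (Fin d₁ ⊕ Fin d₂) → ℝ) : (Fin d₁ ⊕ Fin d₂) → (Fin d₁ ⊕ Fin d₂) → ℝ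
  | Sum.inl i, Sum.inl j => g₁ (p ∘ Sum.inl) i j
  | Sum.inr i, Sum.inr j => g₂ (p ∘ Sum.inr) i j
  | _, _ => 0

lemma pd_const (i : ι) (c : ℝ) (x : ι → ℝ) : pd i (fun _ => c) x = 0 := by
  simp [pd]

def rmap (ι κ : Type*) [Fintype ι] [Fintype κ] (φ : κ → ι) : (ι → ℝ) →L[ℝ] (κ → ℝ) :=
  ContinuousLinearMap.pi fun k => ContinuousLinearMap.proj (φ k)

lemma rmap_apply {κ : Type*} [Fintype κ] (φ : κ → ι) (p : ι → ℝ) :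
    rmap ι κ φ p = p ∘ φ := rfl

lemma pd_comp {κ : Type*} [Fintype κ] [DecidableEq κ] (φ : κ → ι)
    (f : (κ → ℝ) → ℝ) (p : ι → ℝ) (hf : DifferentiableAt ℝ f (p ∘ φ)) (i : ι) :
    pd i (fun q => f (q ∘ φ)) p = fderiv ℝ f (p ∘ φ) ((Pi.single i 1) ∘ φ) := by
  have h1 : (fun q : ι → ℝ => f (q ∘ φ)) = f ∘ (rmap ι κ φ) := rfl
  unfold pd
  rw [h1, fderiv_comp (x := p) hf ((rmap ι κ φ).differentiableAt), (rmap ι κ φ).fderiv]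
  rfl

lemma contDiff_pd (i : ι) {f : (ι → ℝ) → ℝ} (hf : ContDiff ℝ (⊤ : ℕ∞) f) :
    ContDiff ℝ (⊤ : ℕ∞) (pd i f) :=
  (hf.fderiv_right (m := (⊤ : ℕ∞)) (by simp)).clm_apply contDiff_const

section sumlemmas
variable {d₁ d₂ : ℕ}

lemma single_inl_comp_inl (i : Fin d₁) :
    (Pi.single (Sum.inl i : Fin d₁ ⊕ Fin d₂) (1:ℝ)) ∘ Sum.inl = Pi.single i 1 := by
  funext k; simp [Pi.single_apply, Function.comp]

lemma single_inr_comp_inl (j : Fin d₂) :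
    (Pi.single (Sum.inr j : Fin d₁ ⊕ Fin d₂) (1:ℝ)) ∘ Sum.inl = 0 := by
  funext k; simp [Pi.single_apply, Function.comp]

lemma single_inr_comp_inr (j : Fin d₂) :
    (Pi.single (Sum.inr j : Fin d₁ ⊕ Fin d₂) (1:ℝ)) ∘ Sum.inr = Pi.single j 1 := by
  funext k; simp [Pi.single_apply, Function.comp]

lemma single_inl_comp_inr (i : Fin d₁) :
    (Pi.single (Sum.inl i : Fin d₁ ⊕ Fin d₂) (1:ℝ)) ∘ Sum.inr = 0 := by
  funext k; simp [Pi.single_apply, Function.comp]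

lemma pd_inl {f : (Fin d₁ → ℝ) → ℝ} (p : (Fin d₁ ⊕ Fin d₂) → ℝ)
    (hf : DifferentiableAt ℝ f (p ∘ Sum.inl)) (i : Fin d₁) :
    pd (Sum.inl i) (fun q => f (q ∘ Sum.inl)) p = pd i f (p ∘ Sum.inl) := by
  rw [pd_comp Sum.inl f p hf, single_inl_comp_inl]; rfl

lemma pd_inr_left {f : (Fin d₁ → ℝ) → ℝ} (p : (Fin d₁ ⊕ Fin d₂) → ℝ)
    (hf : DifferentiableAt ℝ f (p ∘ Sum.inl)) (j : Fin d₂) :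
    pd (Sum.inr j) (fun q => f (q ∘ Sum.inl)) p = 0 := by
  rw [pd_comp Sum.inl f p hf, single_inr_comp_inl]
  exact (fderiv ℝ f (p ∘ Sum.inl)).map_zero

lemma pd_inr {f : (Fin d₂ → ℝ) → ℝ} (p : (Fin d₁ ⊕ Fin d₂) → ℝ)
    (hf : DifferentiableAt ℝ f (p ∘ Sum.inr)) (j : Fin d₂) :
    pd (Sum.inr j) (fun q => f (q ∘ Sum.inr)) p = pd j f (p ∘ Sum.inr) := by
  rw [pd_comp Sum.inr f p hf, single_inr_comp_inr]; rfl

lemma pd_inl_right {f : (Fin d₂ → ℝ) → ℝ} (p : (Fin d₁ ⊕ Fin d₂) → ℝ)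
    (hf : DifferentiableAt ℝ f (p ∘ Sum.inr)) (i : Fin d₁) :
    pd (Sum.inl i) (fun q => f (q ∘ Sum.inr)) p = 0 := by
  rw [pd_comp Sum.inr f p hf, single_inl_comp_inr]
  exact (fderiv ℝ f (p ∘ Sum.inr)).map_zero

end sumlemmas

section inv
variable {n : ℕ}

lemma contDiff_det {m : ℕ} {A : (Fin n → ℝ) → Matrix (Fin m) (Fin m) ℝ}
    (h : ∀ i j, ContDiff ℝ (⊤ : ℕ∞) fun x => A x i j) :
    ContDiff ℝ (⊤ : ℕ∞) fun x => (A x).det := by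
  have : (fun x => (A x).det)
      = fun x => ∑ σ : Equiv.Perm (Fin m), ((Equiv.Perm.sign σ : ℤ) : ℝ) * ∏ i, A x (σ i) i := by
    funext x
    rw [Matrix.det_apply]
    congr 1; funext σ
    simp [Units.smul_def, zsmul_eq_mul]
  rw [this]
  exact ContDiff.sum fun σ _ => contDiff_const.mul (contDiff_prod fun i _ => h _ _)

lemma ginv_contDiff (g ginv : (Fin n → ℝ) → Fin n → Fin n → ℝ)
    (hsm : ∀ i j, ContDiff ℝ (⊤ : ℕ∞) (fun x => g x i j))
    (hinv : ∀ x i j, ∑ k, g x i k * ginv x k j = if i = j then 1 else 0) :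
    ∀ i j, ContDiff ℝ (⊤ : ℕ∞) (fun x => ginv x i j) := by
  set A : (Fin n → ℝ) → Matrix (Fin n) (Fin n) ℝ := fun x => Matrix.of (g x) with hA
  have hmul : ∀ x, A x * Matrix.of (ginv x) = 1 := by
    intro x
    ext i j
    rw [Matrix.mul_apply, Matrix.one_apply]
    exact hinv x i j
  have hrepr : ∀ x i j, ginv x i j = ((A x).det)⁻¹ * (A x).adjugate i j := by
    intro x i j
    have h1 : Matrix.of (ginv x) = (A x)⁻¹ := (Matrix.inv_eq_right_inv (hmul x)).symm
    have h2 : (A x)⁻¹ = Ring.inverse (A x).det • (A x).adjugate := Matrix.inv_def (A x)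
    have : ginv x i j = Matrix.of (ginv x) i j := rfl
    rw [this, h1, h2, Matrix.smul_apply, Ring.inverse_eq_inv, smul_eq_mul]
  intro i j
  have hdet : ContDiff ℝ (⊤ : ℕ∞) fun x => (A x).det := contDiff_det fun a b => hsm a b
  have hdetne : ∀ x, (A x).det ≠ 0 := fun x =>
    Matrix.det_ne_zero_of_right_inverse (hmul x)
  have hadj : ContDiff ℝ (⊤ : ℕ∞) fun x => (A x).adjugate i j := by
    have : (fun x => (A x).adjugate i j)
        = fun x => ((A x).updateRow j (Pi.single i 1)).det := by
      funext x; rw [Matrix.adjugate_apply]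
    rw [this]
    refine contDiff_det fun a b => ?_
    simp only [Matrix.updateRow_apply]
    by_cases hab : a = j
    · simp only [hab, if_true, Pi.single_apply]
      split_ifs <;> exact contDiff_const
    · simp only [hab, if_false]; exact hsm a b
  have : (fun x => ginv x i j) = fun x => ((A x).det)⁻¹ * (A x).adjugate i j := by
    funext x; exact hrepr x i j
  rw [this]
  exact (hdet.inv hdetne).mul hadj

end inv
lemma christoffel_contDiff {n : ℕ} {g ginv : (Fin n → ℝ) → Fin n → Fin n → ℝ}
    (hsm : ∀ i j, ContDiff ℝ (⊤ : ℕ∞) (fun x => g x i j))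
    (hginv : ∀ i j, ContDiff ℝ (⊤ : ℕ∞) (fun x => ginv x i j))
    (k i j : Fin n) : ContDiff ℝ (⊤ : ℕ∞) (christoffel g ginv k i j) := by
  show ContDiff ℝ (⊤ : ℕ∞) fun x => (1/2) * ∑ l, ginv x k l *
    (pd i (fun y => g y j l) x + pd j (fun y => g y i l) x - pd l (fun y => g y i j) x)
  exact contDiff_const.mul (ContDiff.sum fun l _ => (hginv k l).mul
    (((contDiff_pd i (hsm j l)).add (contDiff_pd j (hsm i l))).sub (contDiff_pd l (hsm i j))))

section prod
variable {d₁ d₂ : ℕ} {g₁ ginv₁ : (Fin d₁ → ℝ) → Fin d₁ → Fin d₁ → ℝ}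
  {g₂ ginv₂ : (Fin d₂ → ℝ) → Fin d₂ → Fin d₂ → ℝ}

@[simp] lemma prodMetric_ll (p) (i j : Fin d₁) :
    prodMetric g₁ g₂ p (Sum.inl i) (Sum.inl j) = g₁ (p ∘ Sum.inl) i j := rfl
@[simp] lemma prodMetric_rr (p) (i j : Fin d₂) :
    prodMetric g₁ g₂ p (Sum.inr i) (Sum.inr j) = g₂ (p ∘ Sum.inr) i j := rfl
@[simp] lemma prodMetric_lr (p) (i : Fin d₁) (j : Fin d₂) :
    prodMetric g₁ g₂ p (Sum.inl i) (Sum.inr j) = 0 := rfl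
@[simp] lemma prodMetric_rl (p) (i : Fin d₂) (j : Fin d₁) :
    prodMetric g₁ g₂ p (Sum.inr i) (Sum.inl j) = 0 := rfl

variable (hsm₁ : ∀ i j, ContDiff ℝ (⊤ : ℕ∞) (fun x => g₁ x i j))
    (hsm₂ : ∀ i j, ContDiff ℝ (⊤ : ℕ∞) (fun x => g₂ x i j))

include hsm₁ in
lemma chr_ll (p) (k i j : Fin d₁) :
    christoffel (prodMetric g₁ g₂) (prodMetric ginv₁ ginv₂) (Sum.inl k) (Sum.inl i) (Sum.inl j) p
      = christoffel g₁ ginv₁ k i j (p ∘ Sum.inl) := by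
  have hd : ∀ (a b : Fin d₁) x, DifferentiableAt ℝ (fun y => g₁ y a b) x :=
    fun a b x => ((hsm₁ a b).differentiable (by simp)).differentiableAt
  unfold christoffel
  rw [Fintype.sum_sum_type]
  have h2 : (∑ l : Fin d₂, prodMetric ginv₁ ginv₂ p (Sum.inl k) (Sum.inr l) *
      (pd (Sum.inl i) (fun y => prodMetric g₁ g₂ y (Sum.inl j) (Sum.inr l)) p
       + pd (Sum.inl j) (fun y => prodMetric g₁ g₂ y (Sum.inl i) (Sum.inr l)) p
       - pd (Sum.inr l) (fun y => prodMetric g₁ g₂ y (Sum.inl i) (Sum.inl j)) p)) = 0 := by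
    refine Finset.sum_eq_zero fun l _ => ?_
    simp only [prodMetric_lr, zero_mul]
  rw [h2, add_zero]
  congr 1
  refine Finset.sum_congr rfl fun l _ => ?_
  simp only [prodMetric_ll]
  rw [pd_inl p (hd j l _) i, pd_inl p (hd i l _) j, pd_inl p (hd i j _) l]

include hsm₂ in
lemma chr_rr (p) (k i j : Fin d₂) :
    christoffel (prodMetric g₁ g₂) (prodMetric ginv₁ ginv₂) (Sum.inr k) (Sum.inr i) (Sum.inr j) p
      = christoffel g₂ ginv₂ k i j (p ∘ Sum.inr) := by
  have hd : ∀ (a b : Fin d₂) x, DifferentiableAt ℝ (fun y => g₂ y a b) x :=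
    fun a b x => ((hsm₂ a b).differentiable (by simp)).differentiableAt
  unfold christoffel
  rw [Fintype.sum_sum_type]
  have h2 : (∑ l : Fin d₁, prodMetric ginv₁ ginv₂ p (Sum.inr k) (Sum.inl l) *
      (pd (Sum.inr i) (fun y => prodMetric g₁ g₂ y (Sum.inr j) (Sum.inl l)) p
       + pd (Sum.inr j) (fun y => prodMetric g₁ g₂ y (Sum.inr i) (Sum.inl l)) p
       - pd (Sum.inl l) (fun y => prodMetric g₁ g₂ y (Sum.inr i) (Sum.inr j)) p)) = 0 := by
    refine Finset.sum_eq_zero fun l _ => ?_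
    simp only [prodMetric_rl, zero_mul]
  rw [h2, zero_add]
  congr 1
  refine Finset.sum_congr rfl fun l _ => ?_
  simp only [prodMetric_rr]
  rw [pd_inr p (hd j l _) i, pd_inr p (hd i l _) j, pd_inr p (hd i j _) l]

include hsm₁ in
lemma chr_l_lr (p) (k i : Fin d₁) (j : Fin d₂) :
    christoffel (prodMetric g₁ g₂) (prodMetric ginv₁ ginv₂) (Sum.inl k) (Sum.inl i) (Sum.inr j) p
      = 0 := by
  have hd : ∀ (a b : Fin d₁) x, DifferentiableAt ℝ (fun y => g₁ y a b) x :=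
    fun a b x => ((hsm₁ a b).differentiable (by simp)).differentiableAt
  unfold christoffel
  rw [Fintype.sum_sum_type]
  have h2 : ∀ l : Fin d₂, prodMetric ginv₁ ginv₂ p (Sum.inl k) (Sum.inr l) *
      (pd (Sum.inl i) (fun y => prodMetric g₁ g₂ y (Sum.inr j) (Sum.inr l)) p
       + pd (Sum.inr j) (fun y => prodMetric g₁ g₂ y (Sum.inl i) (Sum.inr l)) p
       - pd (Sum.inr l) (fun y => prodMetric g₁ g₂ y (Sum.inl i) (Sum.inr j)) p) = 0 := by
    intro l; simp only [prodMetric_lr, zero_mul]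
  have h1 : ∀ l : Fin d₁, prodMetric ginv₁ ginv₂ p (Sum.inl k) (Sum.inl l) *
      (pd (Sum.inl i) (fun y => prodMetric g₁ g₂ y (Sum.inr j) (Sum.inl l)) p
       + pd (Sum.inr j) (fun y => prodMetric g₁ g₂ y (Sum.inl i) (Sum.inl l)) p
       - pd (Sum.inl l) (fun y => prodMetric g₁ g₂ y (Sum.inl i) (Sum.inr j)) p) = 0 := by
    intro l
    simp only [prodMetric_rl, prodMetric_ll, prodMetric_lr]
    rw [pd_const, pd_const, pd_inr_left p (hd i l _) j]
    ring
  rw [Finset.sum_congr rfl fun l _ => h1 l, Finset.sum_congr rfl fun l _ => h2 l]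
  simp

include hsm₁ in
lemma chr_l_rl (p) (k j : Fin d₁) (i : Fin d₂) :
    christoffel (prodMetric g₁ g₂) (prodMetric ginv₁ ginv₂) (Sum.inl k) (Sum.inr i) (Sum.inl j) p
      = 0 := by
  have hd : ∀ (a b : Fin d₁) x, DifferentiableAt ℝ (fun y => g₁ y a b) x :=
    fun a b x => ((hsm₁ a b).differentiable (by simp)).differentiableAt
  unfold christoffel
  rw [Fintype.sum_sum_type]
  have h2 : ∀ l : Fin d₂, prodMetric ginv₁ ginv₂ p (Sum.inl k) (Sum.inr l) *
      (pd (Sum.inr i) (fun y => prodMetric g₁ g₂ y (Sum.inl j) (Sum.inr l)) p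
       + pd (Sum.inl j) (fun y => prodMetric g₁ g₂ y (Sum.inr i) (Sum.inr l)) p
       - pd (Sum.inr l) (fun y => prodMetric g₁ g₂ y (Sum.inr i) (Sum.inl j)) p) = 0 := by
    intro l; simp only [prodMetric_lr, zero_mul]
  have h1 : ∀ l : Fin d₁, prodMetric ginv₁ ginv₂ p (Sum.inl k) (Sum.inl l) *
      (pd (Sum.inr i) (fun y => prodMetric g₁ g₂ y (Sum.inl j) (Sum.inl l)) p
       + pd (Sum.inl j) (fun y => prodMetric g₁ g₂ y (Sum.inr i) (Sum.inl l)) p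
       - pd (Sum.inl l) (fun y => prodMetric g₁ g₂ y (Sum.inr i) (Sum.inl j)) p) = 0 := by
    intro l
    simp only [prodMetric_rl, prodMetric_ll]
    rw [pd_const, pd_const, pd_inr_left p (hd j l _) i]
    ring
  rw [Finset.sum_congr rfl fun l _ => h1 l, Finset.sum_congr rfl fun l _ => h2 l]
  simp

include hsm₂ in
lemma chr_l_rr (p) (k : Fin d₁) (i j : Fin d₂) :
    christoffel (prodMetric g₁ g₂) (prodMetric ginv₁ ginv₂) (Sum.inl k) (Sum.inr i) (Sum.inr j) p
      = 0 := by
  have hd : ∀ (a b : Fin d₂) x, DifferentiableAt ℝ (fun y => g₂ y a b) x :=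
    fun a b x => ((hsm₂ a b).differentiable (by simp)).differentiableAt
  unfold christoffel
  rw [Fintype.sum_sum_type]
  have h2 : ∀ l : Fin d₂, prodMetric ginv₁ ginv₂ p (Sum.inl k) (Sum.inr l) *
      (pd (Sum.inr i) (fun y => prodMetric g₁ g₂ y (Sum.inr j) (Sum.inr l)) p
       + pd (Sum.inr j) (fun y => prodMetric g₁ g₂ y (Sum.inr i) (Sum.inr l)) p
       - pd (Sum.inr l) (fun y => prodMetric g₁ g₂ y (Sum.inr i) (Sum.inr j)) p) = 0 := by
    intro l; simp only [prodMetric_lr, zero_mul]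
  have h1 : ∀ l : Fin d₁, prodMetric ginv₁ ginv₂ p (Sum.inl k) (Sum.inl l) *
      (pd (Sum.inr i) (fun y => prodMetric g₁ g₂ y (Sum.inr j) (Sum.inl l)) p
       + pd (Sum.inr j) (fun y => prodMetric g₁ g₂ y (Sum.inr i) (Sum.inl l)) p
       - pd (Sum.inl l) (fun y => prodMetric g₁ g₂ y (Sum.inr i) (Sum.inr j)) p) = 0 := by
    intro l
    simp only [prodMetric_rl, prodMetric_rr]
    rw [pd_const, pd_const, pd_inl_right p (hd i j _) l]
    ring
  rw [Finset.sum_congr rfl fun l _ => h1 l, Finset.sum_congr rfl fun l _ => h2 l]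
  simp

include hsm₁ in
lemma chr_r_ll (p) (k : Fin d₂) (i j : Fin d₁) :
    christoffel (prodMetric g₁ g₂) (prodMetric ginv₁ ginv₂) (Sum.inr k) (Sum.inl i) (Sum.inl j) p
      = 0 := by
  unfold christoffel
  rw [Fintype.sum_sum_type]
  have h1 : ∀ l : Fin d₁, prodMetric ginv₁ ginv₂ p (Sum.inr k) (Sum.inl l) *
      (pd (Sum.inl i) (fun y => prodMetric g₁ g₂ y (Sum.inl j) (Sum.inl l)) p
       + pd (Sum.inl j) (fun y => prodMetric g₁ g₂ y (Sum.inl i) (Sum.inl l)) p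
       - pd (Sum.inl l) (fun y => prodMetric g₁ g₂ y (Sum.inl i) (Sum.inl j)) p) = 0 := by
    intro l; simp only [prodMetric_rl, zero_mul]
  have h2 : ∀ l : Fin d₂, prodMetric ginv₁ ginv₂ p (Sum.inr k) (Sum.inr l) *
      (pd (Sum.inl i) (fun y => prodMetric g₁ g₂ y (Sum.inl j) (Sum.inr l)) p
       + pd (Sum.inl j) (fun y => prodMetric g₁ g₂ y (Sum.inl i) (Sum.inr l)) p
       - pd (Sum.inr l) (fun y => prodMetric g₁ g₂ y (Sum.inl i) (Sum.inl j)) p) = 0 := by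
    intro l
    simp only [prodMetric_lr, prodMetric_ll]
    rw [pd_const, pd_const, pd_inr_left p (((hsm₁ i j).differentiable (by simp)).differentiableAt) l]
    ring
  rw [Finset.sum_congr rfl fun l _ => h1 l, Finset.sum_congr rfl fun l _ => h2 l]
  simp

include hsm₂ in
lemma chr_r_rl (p) (k i : Fin d₂) (j : Fin d₁) :
    christoffel (prodMetric g₁ g₂) (prodMetric ginv₁ ginv₂) (Sum.inr k) (Sum.inr i) (Sum.inl j) p
      = 0 := by
  have hd : ∀ (a b : Fin d₂) x, DifferentiableAt ℝ (fun y => g₂ y a b) x :=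
    fun a b x => ((hsm₂ a b).differentiable (by simp)).differentiableAt
  unfold christoffel
  rw [Fintype.sum_sum_type]
  have h1 : ∀ l : Fin d₁, prodMetric ginv₁ ginv₂ p (Sum.inr k) (Sum.inl l) *
      (pd (Sum.inr i) (fun y => prodMetric g₁ g₂ y (Sum.inl j) (Sum.inl l)) p
       + pd (Sum.inl j) (fun y => prodMetric g₁ g₂ y (Sum.inr i) (Sum.inl l)) p
       - pd (Sum.inl l) (fun y => prodMetric g₁ g₂ y (Sum.inr i) (Sum.inl j)) p) = 0 := by
    intro l; simp only [prodMetric_rl, zero_mul]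
  have h2 : ∀ l : Fin d₂, prodMetric ginv₁ ginv₂ p (Sum.inr k) (Sum.inr l) *
      (pd (Sum.inr i) (fun y => prodMetric g₁ g₂ y (Sum.inl j) (Sum.inr l)) p
       + pd (Sum.inl j) (fun y => prodMetric g₁ g₂ y (Sum.inr i) (Sum.inr l)) p
       - pd (Sum.inr l) (fun y => prodMetric g₁ g₂ y (Sum.inr i) (Sum.inl j)) p) = 0 := by
    intro l
    simp only [prodMetric_lr, prodMetric_rr, prodMetric_rl]
    rw [pd_const, pd_const, pd_inl_right p (hd i l _) j]
    ring
  rw [Finset.sum_congr rfl fun l _ => h1 l, Finset.sum_congr rfl fun l _ => h2 l]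
  simp

include hsm₂ in
lemma chr_r_lr (p) (k j : Fin d₂) (i : Fin d₁) :
    christoffel (prodMetric g₁ g₂) (prodMetric ginv₁ ginv₂) (Sum.inr k) (Sum.inl i) (Sum.inr j) p
      = 0 := by
  have hd : ∀ (a b : Fin d₂) x, DifferentiableAt ℝ (fun y => g₂ y a b) x :=
    fun a b x => ((hsm₂ a b).differentiable (by simp)).differentiableAt
  unfold christoffel
  rw [Fintype.sum_sum_type]
  have h1 : ∀ l : Fin d₁, prodMetric ginv₁ ginv₂ p (Sum.inr k) (Sum.inl l) *
      (pd (Sum.inl i) (fun y => prodMetric g₁ g₂ y (Sum.inr j) (Sum.inl l)) p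
       + pd (Sum.inr j) (fun y => prodMetric g₁ g₂ y (Sum.inl i) (Sum.inl l)) p
       - pd (Sum.inl l) (fun y => prodMetric g₁ g₂ y (Sum.inl i) (Sum.inr j)) p) = 0 := by
    intro l; simp only [prodMetric_rl, zero_mul]
  have h2 : ∀ l : Fin d₂, prodMetric ginv₁ ginv₂ p (Sum.inr k) (Sum.inr l) *
      (pd (Sum.inl i) (fun y => prodMetric g₁ g₂ y (Sum.inr j) (Sum.inr l)) p
       + pd (Sum.inr j) (fun y => prodMetric g₁ g₂ y (Sum.inl i) (Sum.inr l)) p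
       - pd (Sum.inr l) (fun y => prodMetric g₁ g₂ y (Sum.inl i) (Sum.inr j)) p) = 0 := by
    intro l
    simp only [prodMetric_lr, prodMetric_rr]
    rw [pd_const, pd_const, pd_inl_right p (hd j l _) i]
    ring
  rw [Finset.sum_congr rfl fun l _ => h1 l, Finset.sum_congr rfl fun l _ => h2 l]
  simp

variable (hginv₁ : ∀ i j, ContDiff ℝ (⊤ : ℕ∞) (fun x => ginv₁ x i j))
    (hginv₂ : ∀ i j, ContDiff ℝ (⊤ : ℕ∞) (fun x => ginv₂ x i j))

include hsm₁ hsm₂ hginv₁ in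
lemma riem_ll (p) (l k i j : Fin d₁) :
    riemann (prodMetric g₁ g₂) (prodMetric ginv₁ ginv₂)
      (Sum.inl l) (Sum.inl k) (Sum.inl i) (Sum.inl j) p
      = riemann g₁ ginv₁ l k i j (p ∘ Sum.inl) := by
  have hdc : ∀ (a b c : Fin d₁),
      DifferentiableAt ℝ (christoffel g₁ ginv₁ a b c) (p ∘ Sum.inl) := fun a b c =>
    ((christoffel_contDiff hsm₁ hginv₁ a b c).differentiable (by simp)).differentiableAt
  unfold riemann
  rw [show (christoffel (prodMetric g₁ g₂) (prodMetric ginv₁ ginv₂)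
        (Sum.inl l) (Sum.inl j) (Sum.inl k))
      = (fun q => christoffel g₁ ginv₁ l j k (q ∘ Sum.inl)) from
        funext fun q => chr_ll hsm₁ q l j k,
      show (christoffel (prodMetric g₁ g₂) (prodMetric ginv₁ ginv₂)
        (Sum.inl l) (Sum.inl i) (Sum.inl k))
      = (fun q => christoffel g₁ ginv₁ l i k (q ∘ Sum.inl)) from
        funext fun q => chr_ll hsm₁ q l i k,
      pd_inl p (hdc l j k) i, pd_inl p (hdc l i k) j]
  simp only [Fintype.sum_sum_type, chr_ll hsm₁, chr_rr hsm₂, chr_l_lr hsm₁, chr_l_rl hsm₁,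
    chr_l_rr hsm₂, chr_r_ll hsm₁, chr_r_rl hsm₂, chr_r_lr hsm₂, zero_mul, mul_zero,
    Finset.sum_const_zero, add_zero, zero_add]

include hsm₁ hsm₂ hginv₂ in
lemma riem_rr (p) (l k i j : Fin d₂) :
    riemann (prodMetric g₁ g₂) (prodMetric ginv₁ ginv₂)
      (Sum.inr l) (Sum.inr k) (Sum.inr i) (Sum.inr j) p
      = riemann g₂ ginv₂ l k i j (p ∘ Sum.inr) := by
  have hdc : ∀ (a b c : Fin d₂),
      DifferentiableAt ℝ (christoffel g₂ ginv₂ a b c) (p ∘ Sum.inr) := fun a b c =>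
    ((christoffel_contDiff hsm₂ hginv₂ a b c).differentiable (by simp)).differentiableAt
  unfold riemann
  rw [show (christoffel (prodMetric g₁ g₂) (prodMetric ginv₁ ginv₂)
        (Sum.inr l) (Sum.inr j) (Sum.inr k))
      = (fun q => christoffel g₂ ginv₂ l j k (q ∘ Sum.inr)) from
        funext fun q => chr_rr hsm₂ q l j k,
      show (christoffel (prodMetric g₁ g₂) (prodMetric ginv₁ ginv₂)
        (Sum.inr l) (Sum.inr i) (Sum.inr k))
      = (fun q => christoffel g₂ ginv₂ l i k (q ∘ Sum.inr)) from
        funext fun q => chr_rr hsm₂ q l i k,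
      pd_inr p (hdc l j k) i, pd_inr p (hdc l i k) j]
  simp only [Fintype.sum_sum_type, chr_ll hsm₁, chr_rr hsm₂, chr_l_lr hsm₁, chr_l_rl hsm₁,
    chr_l_rr hsm₂, chr_r_ll hsm₁, chr_r_rl hsm₂, chr_r_lr hsm₂, zero_mul, mul_zero,
    Finset.sum_const_zero, add_zero, zero_add]

include hsm₁ hsm₂ in
lemma riem_l_rlr (p) (m : Fin d₁) (c : Fin d₂) (a : Fin d₁) (b : Fin d₂) :
    riemann (prodMetric g₁ g₂) (prodMetric ginv₁ ginv₂)
      (Sum.inl m) (Sum.inr c) (Sum.inl a) (Sum.inr b) p = 0 := by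
  unfold riemann
  rw [show (christoffel (prodMetric g₁ g₂) (prodMetric ginv₁ ginv₂)
        (Sum.inl m) (Sum.inr b) (Sum.inr c)) = (fun _ => (0:ℝ)) from
        funext fun q => chr_l_rr hsm₂ q m b c,
      show (christoffel (prodMetric g₁ g₂) (prodMetric ginv₁ ginv₂)
        (Sum.inl m) (Sum.inl a) (Sum.inr c)) = (fun _ => (0:ℝ)) from
        funext fun q => chr_l_lr hsm₁ q m a c,
      pd_const, pd_const]
  simp only [Fintype.sum_sum_type, chr_ll hsm₁, chr_rr hsm₂, chr_l_lr hsm₁, chr_l_rl hsm₁,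
    chr_l_rr hsm₂, chr_r_ll hsm₁, chr_r_rl hsm₂, chr_r_lr hsm₂, zero_mul, mul_zero,
    Finset.sum_const_zero, add_zero, zero_add]
  ring

include hsm₁ hsm₂ in
lemma riem_r_lrl (p) (m : Fin d₂) (k : Fin d₁) (a : Fin d₂) (b : Fin d₁) :
    riemann (prodMetric g₁ g₂) (prodMetric ginv₁ ginv₂)
      (Sum.inr m) (Sum.inl k) (Sum.inr a) (Sum.inl b) p = 0 := by
  unfold riemann
  rw [show (christoffel (prodMetric g₁ g₂) (prodMetric ginv₁ ginv₂)
        (Sum.inr m) (Sum.inl b) (Sum.inl k)) = (fun _ => (0:ℝ)) from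
        funext fun q => chr_r_ll hsm₁ q m b k,
      show (christoffel (prodMetric g₁ g₂) (prodMetric ginv₁ ginv₂)
        (Sum.inr m) (Sum.inr a) (Sum.inl k)) = (fun _ => (0:ℝ)) from
        funext fun q => chr_r_rl hsm₂ q m a k,
      pd_const, pd_const]
  simp only [Fintype.sum_sum_type, chr_ll hsm₁, chr_rr hsm₂, chr_l_lr hsm₁, chr_l_rl hsm₁,
    chr_l_rr hsm₂, chr_r_ll hsm₁, chr_r_rl hsm₂, chr_r_lr hsm₂, zero_mul, mul_zero,
    Finset.sum_const_zero, add_zero, zero_add]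
  ring

include hsm₁ hsm₂ hginv₁ in
lemma ricci_ll (p) (k j : Fin d₁) :
    ricci (prodMetric g₁ g₂) (prodMetric ginv₁ ginv₂) (Sum.inl k) (Sum.inl j) p
      = ricci g₁ ginv₁ k j (p ∘ Sum.inl) := by
  unfold ricci
  rw [Fintype.sum_sum_type]
  simp only [riem_ll hsm₁ hsm₂ hginv₁, riem_r_lrl hsm₁ hsm₂, Finset.sum_const_zero, add_zero]

include hsm₁ hsm₂ hginv₂ in
lemma ricci_rr (p) (k j : Fin d₂) :
    ricci (prodMetric g₁ g₂) (prodMetric ginv₁ ginv₂) (Sum.inr k) (Sum.inr j) p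
      = ricci g₂ ginv₂ k j (p ∘ Sum.inr) := by
  unfold ricci
  rw [Fintype.sum_sum_type]
  simp only [riem_rr hsm₁ hsm₂ hginv₂, riem_l_rlr hsm₁ hsm₂, Finset.sum_const_zero, zero_add]

include hsm₁ hsm₂ hginv₁ hginv₂ in
lemma scalar_prod (p) :
    scalarCurv (prodMetric g₁ g₂) (prodMetric ginv₁ ginv₂) p
      = scalarCurv g₁ ginv₁ (p ∘ Sum.inl) + scalarCurv g₂ ginv₂ (p ∘ Sum.inr) := by
  unfold scalarCurv
  rw [Fintype.sum_sum_type]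
  congr 1
  · rw [Finset.sum_congr rfl fun k _ => Fintype.sum_sum_type _]
    simp only [prodMetric_ll, prodMetric_lr, zero_mul, Finset.sum_const_zero, add_zero,
      ricci_ll hsm₁ hsm₂ hginv₁]
  · rw [Finset.sum_congr rfl fun k _ => Fintype.sum_sum_type _]
    simp only [prodMetric_rr, prodMetric_rl, zero_mul, Finset.sum_const_zero, zero_add,
      ricci_rr hsm₁ hsm₂ hginv₂]

include hsm₁ hsm₂ hginv₁ in
lemma rlow_ll (p) (i j k l : Fin d₁) :
    riemannLow (prodMetric g₁ g₂) (prodMetric ginv₁ ginv₂)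
      (Sum.inl i) (Sum.inl j) (Sum.inl k) (Sum.inl l) p
      = riemannLow g₁ ginv₁ i j k l (p ∘ Sum.inl) := by
  unfold riemannLow
  rw [Fintype.sum_sum_type]
  simp only [prodMetric_ll, prodMetric_lr, zero_mul, Finset.sum_const_zero, add_zero,
    riem_ll hsm₁ hsm₂ hginv₁]

include hsm₁ hsm₂ hginv₂ in
lemma rlow_rr (p) (i j k l : Fin d₂) :
    riemannLow (prodMetric g₁ g₂) (prodMetric ginv₁ ginv₂)
      (Sum.inr i) (Sum.inr j) (Sum.inr k) (Sum.inr l) p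
      = riemannLow g₂ ginv₂ i j k l (p ∘ Sum.inr) := by
  unfold riemannLow
  rw [Fintype.sum_sum_type]
  simp only [prodMetric_rr, prodMetric_rl, zero_mul, Finset.sum_const_zero, zero_add,
    riem_rr hsm₁ hsm₂ hginv₂]

include hsm₁ hsm₂ in
lemma rlow_mixed (p) (a : Fin d₁) (b c : Fin d₂) (e : Fin d₁) :
    riemannLow (prodMetric g₁ g₂) (prodMetric ginv₁ ginv₂)
      (Sum.inl a) (Sum.inr b) (Sum.inr c) (Sum.inl e) p = 0 := by
  unfold riemannLow
  rw [Fintype.sum_sum_type]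
  simp only [prodMetric_ll, prodMetric_lr, zero_mul, Finset.sum_const_zero, add_zero,
    riem_l_rlr hsm₁ hsm₂, mul_zero]

end prod

lemma dsum_mul {n : ℕ} (a : ℝ) (F : Fin n → Fin n → ℝ) :
    ∑ b, ∑ c, a * F b c = a * ∑ b, ∑ c, F b c := by
  simp [Finset.mul_sum]

lemma dsum_add {n : ℕ} (F G : Fin n → Fin n → ℝ) :
    ∑ b, ∑ c, (F b c + G b c) = (∑ b, ∑ c, F b c) + (∑ b, ∑ c, G b c) := by
  simp [Finset.sum_add_distrib]

lemma trace_ginv {n : ℕ} (g ginv : (Fin n → ℝ) → Fin n → Fin n → ℝ)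
    (hsym : ∀ x i j, g x i j = g x j i)
    (hinv : ∀ x i j, ∑ k, g x i k * ginv x k j = if i = j then 1 else 0)
    (x : Fin n → ℝ) :
    ∑ b, ∑ c, ginv x b c * g x b c = (n : ℝ) := by
  rw [Finset.sum_comm]
  have : ∀ c : Fin n, ∑ b, ginv x b c * g x b c = 1 := by
    intro c
    have h := hinv x c c
    rw [if_pos rfl] at h
    rw [← h]
    exact Finset.sum_congr rfl fun b _ => by rw [hsym x b c, mul_comm]
  rw [Finset.sum_congr rfl fun c _ => this c]
  simp

/-- if a product pseudo-Riemannian metric of dimension `d₁+d₂ ≥ 4`,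
`d₁, d₂ ≥ 2`, is conformally flat (vanishing Weyl tensor), then the scalar curvatures
of the factors are constants with `s₁/(d₁(d₁−1)) = −s₂/(d₂(d₂−1))` and each factor has
constant sectional curvature, `k₁ = −k₂`. -/
theorem stmt8 {d₁ d₂ : ℕ} (h₁ : 2 ≤ d₁) (h₂ : 2 ≤ d₂) (hd : 4 ≤ d₁ + d₂)
    (g₁ ginv₁ : (Fin d₁ → ℝ) → Fin d₁ → Fin d₁ → ℝ)
    (g₂ ginv₂ : (Fin d₂ → ℝ) → Fin d₂ → Fin d₂ → ℝ)
    (hsm₁ : ∀ i j, ContDiff ℝ (⊤ : ℕ∞) (fun x => g₁ x i j))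
    (hsm₂ : ∀ i j, ContDiff ℝ (⊤ : ℕ∞) (fun x => g₂ x i j))
    (hsyminv₁ : ∀ x i j, g₁ x i j = g₁ x j i)
    (hsyminv₂ : ∀ x i j, g₂ x i j = g₂ x j i)
    (hinv₁ : ∀ x i j, ∑ k, g₁ x i k * ginv₁ x k j = if i = j then 1 else 0)
    (hinv₂ : ∀ x i j, ∑ k, g₂ x i k * ginv₂ x k j = if i = j then 1 else 0)
    (hflat : ∀ (p : (Fin d₁ ⊕ Fin d₂) → ℝ) i j k l,
      weyl (prodMetric g₁ g₂)
        (fun q => prodMetric ginv₁ ginv₂ q) i j k l p = 0) :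
    ∃ s₁ s₂ k₁ k₂ : ℝ,
      (∀ x, scalarCurv g₁ ginv₁ x = s₁) ∧
      (∀ y, scalarCurv g₂ ginv₂ y = s₂) ∧
      s₁ / (d₁ * (d₁ - 1)) = - (s₂ / (d₂ * (d₂ - 1))) ∧
      (∀ x i j k l, riemannLow g₁ ginv₁ i j k l x
        = k₁ * (g₁ x j k * g₁ x i l - g₁ x i k * g₁ x j l)) ∧
      (∀ y i j k l, riemannLow g₂ ginv₂ i j k l y
        = k₂ * (g₂ y j k * g₂ y i l - g₂ y i k * g₂ y j l)) ∧
      k₁ = - k₂ := by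
  have hginv₁ := ginv_contDiff g₁ ginv₁ hsm₁ hinv₁
  have hginv₂ := ginv_contDiff g₂ ginv₂ hsm₂ hinv₂
  have hd4 : (4:ℝ) ≤ (d₁:ℝ) + (d₂:ℝ) := by exact_mod_cast hd
  have hD1 : (2:ℝ) ≤ (d₁:ℝ) := by exact_mod_cast h₁
  have hD2 : (2:ℝ) ≤ (d₂:ℝ) := by exact_mod_cast h₂
  have hne2 : (d₁:ℝ) + (d₂:ℝ) - 2 ≠ 0 := by intro h; linarith
  have hne1 : (d₁:ℝ) + (d₂:ℝ) - 1 ≠ 0 := by intro h; linarith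
  have hD1ne : (d₁:ℝ) ≠ 0 := by intro h; linarith
  have hD2ne : (d₂:ℝ) ≠ 0 := by intro h; linarith
  have hD1ne1 : (d₁:ℝ) - 1 ≠ 0 := by intro h; linarith
  have hD2ne1 : (d₂:ℝ) - 1 ≠ 0 := by intro h; linarith
  -- The fundamental mixed-Weyl equation
  have hE : ∀ (x : Fin d₁ → ℝ) (y : Fin d₂ → ℝ) (a e : Fin d₁) (b c : Fin d₂),
      ((d₁:ℝ) + (d₂:ℝ) - 1) *
          (g₂ y b c * ricci g₁ ginv₁ a e x + ricci g₂ ginv₂ b c y * g₁ x a e)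
        = (scalarCurv g₁ ginv₁ x + scalarCurv g₂ ginv₂ y) * (g₁ x a e * g₂ y b c) := by
    intro x y a e b c
    have hW := hflat (Sum.elim x y) (Sum.inl a) (Sum.inr b) (Sum.inr c) (Sum.inl e)
    unfold weyl schouten at hW
    simp only [rlow_mixed hsm₁ hsm₂, ricci_ll hsm₁ hsm₂ hginv₁, ricci_rr hsm₁ hsm₂ hginv₂,
      scalar_prod hsm₁ hsm₂ hginv₁ hginv₂, prodMetric_ll, prodMetric_rr, prodMetric_lr,
      prodMetric_rl, Sum.elim_comp_inl, Sum.elim_comp_inr, Fintype.card_sum, Fintype.card_fin,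
      mul_zero, zero_mul, add_zero, zero_add, Nat.cast_add] at hW
    field_simp [hne2, hne1] at hW
    have hCne : ((d₁:ℝ) + (d₂:ℝ) - 2) * (2 * ((d₁:ℝ) + (d₂:ℝ) - 1)) * 2 ≠ 0 := by
      refine mul_ne_zero (mul_ne_zero hne2 ?_) two_ne_zero
      intro h; apply hne1; linarith
    apply mul_left_cancel₀ hCne
    linear_combination -(((d₁:ℝ) + (d₂:ℝ) - 2) * (2 * ((d₁:ℝ) + (d₂:ℝ) - 1))) * hW
  -- contraction of hE over the second factor
  have hstar : ∀ (x : Fin d₁ → ℝ) (y : Fin d₂ → ℝ) (a e : Fin d₁),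
      ((d₁:ℝ) + (d₂:ℝ) - 1) *
          ((d₂:ℝ) * ricci g₁ ginv₁ a e x + scalarCurv g₂ ginv₂ y * g₁ x a e)
        = (scalarCurv g₁ ginv₁ x + scalarCurv g₂ ginv₂ y) * (g₁ x a e * (d₂:ℝ)) := by
    intro x y a e
    have h : ∑ b, ∑ c, ginv₂ y b c *
          (((d₁:ℝ) + (d₂:ℝ) - 1) *
            (g₂ y b c * ricci g₁ ginv₁ a e x + ricci g₂ ginv₂ b c y * g₁ x a e))
        = ∑ b, ∑ c, ginv₂ y b c *
          ((scalarCurv g₁ ginv₁ x + scalarCurv g₂ ginv₂ y) * (g₁ x a e * g₂ y b c)) :=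
      Finset.sum_congr rfl fun b _ => Finset.sum_congr rfl fun c _ => by rw [hE x y a e b c]
    have e1 : ∑ b, ∑ c, ginv₂ y b c *
          (((d₁:ℝ) + (d₂:ℝ) - 1) *
            (g₂ y b c * ricci g₁ ginv₁ a e x + ricci g₂ ginv₂ b c y * g₁ x a e))
        = (((d₁:ℝ) + (d₂:ℝ) - 1) * ricci g₁ ginv₁ a e x) *
            (∑ b, ∑ c, ginv₂ y b c * g₂ y b c)
          + (((d₁:ℝ) + (d₂:ℝ) - 1) * g₁ x a e) *
            (∑ b, ∑ c, ginv₂ y b c * ricci g₂ ginv₂ b c y) := by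
      rw [← dsum_mul, ← dsum_mul, ← dsum_add]
      exact Finset.sum_congr rfl fun b _ => Finset.sum_congr rfl fun c _ => by ring
    have e2 : ∑ b, ∑ c, ginv₂ y b c *
          ((scalarCurv g₁ ginv₁ x + scalarCurv g₂ ginv₂ y) * (g₁ x a e * g₂ y b c))
        = ((scalarCurv g₁ ginv₁ x + scalarCurv g₂ ginv₂ y) * g₁ x a e) *
            (∑ b, ∑ c, ginv₂ y b c * g₂ y b c) := by
      rw [← dsum_mul]
      exact Finset.sum_congr rfl fun b _ => Finset.sum_congr rfl fun c _ => by ring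
    rw [e1, e2, trace_ginv g₂ ginv₂ hsyminv₂ hinv₂ y] at h
    have e3 : ∑ b, ∑ c, ginv₂ y b c * ricci g₂ ginv₂ b c y = scalarCurv g₂ ginv₂ y := rfl
    rw [e3] at h
    linear_combination h
  -- contraction of hE over the first factor
  have hstar2 : ∀ (x : Fin d₁ → ℝ) (y : Fin d₂ → ℝ) (b c : Fin d₂),
      ((d₁:ℝ) + (d₂:ℝ) - 1) *
          ((d₁:ℝ) * ricci g₂ ginv₂ b c y + scalarCurv g₁ ginv₁ x * g₂ y b c)
        = (scalarCurv g₁ ginv₁ x + scalarCurv g₂ ginv₂ y) * (g₂ y b c * (d₁:ℝ)) := by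
    intro x y b c
    have h : ∑ a, ∑ e, ginv₁ x a e *
          (((d₁:ℝ) + (d₂:ℝ) - 1) *
            (g₂ y b c * ricci g₁ ginv₁ a e x + ricci g₂ ginv₂ b c y * g₁ x a e))
        = ∑ a, ∑ e, ginv₁ x a e *
          ((scalarCurv g₁ ginv₁ x + scalarCurv g₂ ginv₂ y) * (g₁ x a e * g₂ y b c)) :=
      Finset.sum_congr rfl fun a _ => Finset.sum_congr rfl fun e _ => by rw [hE x y a e b c]
    have e1 : ∑ a, ∑ e, ginv₁ x a e *
          (((d₁:ℝ) + (d₂:ℝ) - 1) *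
            (g₂ y b c * ricci g₁ ginv₁ a e x + ricci g₂ ginv₂ b c y * g₁ x a e))
        = (((d₁:ℝ) + (d₂:ℝ) - 1) * g₂ y b c) *
            (∑ a, ∑ e, ginv₁ x a e * ricci g₁ ginv₁ a e x)
          + (((d₁:ℝ) + (d₂:ℝ) - 1) * ricci g₂ ginv₂ b c y) *
            (∑ a, ∑ e, ginv₁ x a e * g₁ x a e) := by
      rw [← dsum_mul, ← dsum_mul, ← dsum_add]
      exact Finset.sum_congr rfl fun a _ => Finset.sum_congr rfl fun e _ => by ring
    have e2 : ∑ a, ∑ e, ginv₁ x a e *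
          ((scalarCurv g₁ ginv₁ x + scalarCurv g₂ ginv₂ y) * (g₁ x a e * g₂ y b c))
        = ((scalarCurv g₁ ginv₁ x + scalarCurv g₂ ginv₂ y) * g₂ y b c) *
            (∑ a, ∑ e, ginv₁ x a e * g₁ x a e) := by
      rw [← dsum_mul]
      exact Finset.sum_congr rfl fun a _ => Finset.sum_congr rfl fun e _ => by ring
    rw [e1, e2, trace_ginv g₁ ginv₁ hsyminv₁ hinv₁ x] at h
    have e3 : ∑ a, ∑ e, ginv₁ x a e * ricci g₁ ginv₁ a e x = scalarCurv g₁ ginv₁ x := rfl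
    rw [e3] at h
    linear_combination h
  -- the scalar relation
  have hdag : ∀ x y, (d₂:ℝ) * ((d₂:ℝ) - 1) * scalarCurv g₁ ginv₁ x
      + (d₁:ℝ) * ((d₁:ℝ) - 1) * scalarCurv g₂ ginv₂ y = 0 := by
    intro x y
    have h : ∑ a, ∑ e, ginv₁ x a e *
          (((d₁:ℝ) + (d₂:ℝ) - 1) *
            ((d₂:ℝ) * ricci g₁ ginv₁ a e x + scalarCurv g₂ ginv₂ y * g₁ x a e))
        = ∑ a, ∑ e, ginv₁ x a e *
          ((scalarCurv g₁ ginv₁ x + scalarCurv g₂ ginv₂ y) * (g₁ x a e * (d₂:ℝ))) :=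
      Finset.sum_congr rfl fun a _ => Finset.sum_congr rfl fun e _ => by rw [hstar x y a e]
    have e1 : ∑ a, ∑ e, ginv₁ x a e *
          (((d₁:ℝ) + (d₂:ℝ) - 1) *
            ((d₂:ℝ) * ricci g₁ ginv₁ a e x + scalarCurv g₂ ginv₂ y * g₁ x a e))
        = (((d₁:ℝ) + (d₂:ℝ) - 1) * (d₂:ℝ)) *
            (∑ a, ∑ e, ginv₁ x a e * ricci g₁ ginv₁ a e x)
          + (((d₁:ℝ) + (d₂:ℝ) - 1) * scalarCurv g₂ ginv₂ y) *
            (∑ a, ∑ e, ginv₁ x a e * g₁ x a e) := by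
      rw [← dsum_mul, ← dsum_mul, ← dsum_add]
      exact Finset.sum_congr rfl fun a _ => Finset.sum_congr rfl fun e _ => by ring
    have e2 : ∑ a, ∑ e, ginv₁ x a e *
          ((scalarCurv g₁ ginv₁ x + scalarCurv g₂ ginv₂ y) * (g₁ x a e * (d₂:ℝ)))
        = ((scalarCurv g₁ ginv₁ x + scalarCurv g₂ ginv₂ y) * (d₂:ℝ)) *
            (∑ a, ∑ e, ginv₁ x a e * g₁ x a e) := by
      rw [← dsum_mul]
      exact Finset.sum_congr rfl fun a _ => Finset.sum_congr rfl fun e _ => by ring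
    rw [e1, e2, trace_ginv g₁ ginv₁ hsyminv₁ hinv₁ x] at h
    have e3 : ∑ a, ∑ e, ginv₁ x a e * ricci g₁ ginv₁ a e x = scalarCurv g₁ ginv₁ x := rfl
    rw [e3] at h
    linear_combination h
  set s1c := scalarCurv g₁ ginv₁ (fun _ => 0) with hs1c
  set s2c := scalarCurv g₂ ginv₂ (fun _ => 0) with hs2c
  have hs1 : ∀ x, scalarCurv g₁ ginv₁ x = s1c := by
    intro x
    have h1 := hdag x (fun _ => 0)
    have h2 := hdag (fun _ => 0) (fun _ => 0)
    have hne : (d₂:ℝ) * ((d₂:ℝ) - 1) ≠ 0 := mul_ne_zero hD2ne hD2ne1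
    have : (d₂:ℝ) * ((d₂:ℝ) - 1) * scalarCurv g₁ ginv₁ x
        = (d₂:ℝ) * ((d₂:ℝ) - 1) * s1c := by linarith
    exact mul_left_cancel₀ hne this
  have hs2 : ∀ y, scalarCurv g₂ ginv₂ y = s2c := by
    intro y
    have h1 := hdag (fun _ => 0) y
    have h2 := hdag (fun _ => 0) (fun _ => 0)
    have hne : (d₁:ℝ) * ((d₁:ℝ) - 1) ≠ 0 := mul_ne_zero hD1ne hD1ne1
    have : (d₁:ℝ) * ((d₁:ℝ) - 1) * scalarCurv g₂ ginv₂ y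
        = (d₁:ℝ) * ((d₁:ℝ) - 1) * s2c := by linarith
    exact mul_left_cancel₀ hne this
  have hdag0 : (d₂:ℝ) * ((d₂:ℝ) - 1) * s1c + (d₁:ℝ) * ((d₁:ℝ) - 1) * s2c = 0 :=
    hdag (fun _ => 0) (fun _ => 0)
  -- Einstein constants
  set c₁ : ℝ := ((s1c + s2c) * (d₂:ℝ) - ((d₁:ℝ) + (d₂:ℝ) - 1) * s2c)
      / ((d₂:ℝ) * ((d₁:ℝ) + (d₂:ℝ) - 1)) with hc₁
  set c₂ : ℝ := ((s1c + s2c) * (d₁:ℝ) - ((d₁:ℝ) + (d₂:ℝ) - 1) * s1c)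
      / ((d₁:ℝ) * ((d₁:ℝ) + (d₂:ℝ) - 1)) with hc₂
  have hEin1 : ∀ x a e, ricci g₁ ginv₁ a e x = c₁ * g₁ x a e := by
    intro x a e
    have h := hstar x (fun _ => 0) a e
    rw [hs1 x] at h
    rw [hc₁]
    field_simp
    linear_combination h
  have hEin2 : ∀ y b c, ricci g₂ ginv₂ b c y = c₂ * g₂ y b c := by
    intro y b c
    have h := hstar2 (fun _ => 0) y b c
    rw [hs2 y] at h
    rw [hc₂]
    field_simp
    linear_combination h
  -- sectional curvature constants
  set K1 : ℝ := 2 * (c₁ - (s1c + s2c) / (2 * ((d₁:ℝ) + (d₂:ℝ) - 1))) / ((d₁:ℝ) + (d₂:ℝ) - 2)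
    with hK1
  set K2 : ℝ := 2 * (c₂ - (s1c + s2c) / (2 * ((d₁:ℝ) + (d₂:ℝ) - 1))) / ((d₁:ℝ) + (d₂:ℝ) - 2)
    with hK2
  refine ⟨s1c, s2c, K1, K2, hs1, hs2, ?_, ?_, ?_, ?_⟩
  · rw [show -(s2c / ((d₂:ℝ) * ((d₂:ℝ) - 1))) = (-s2c) / ((d₂:ℝ) * ((d₂:ℝ) - 1)) by ring,
      div_eq_div_iff (mul_ne_zero hD1ne hD1ne1) (mul_ne_zero hD2ne hD2ne1)]
    linear_combination hdag0
  · intro x i j k l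
    have hW := hflat (Sum.elim x (fun _ => 0)) (Sum.inl i) (Sum.inl j) (Sum.inl k) (Sum.inl l)
    unfold weyl schouten at hW
    simp only [rlow_ll hsm₁ hsm₂ hginv₁, ricci_ll hsm₁ hsm₂ hginv₁,
      scalar_prod hsm₁ hsm₂ hginv₁ hginv₂, prodMetric_ll,
      Sum.elim_comp_inl, Sum.elim_comp_inr, Fintype.card_sum, Fintype.card_fin,
      Nat.cast_add] at hW
    rw [hs1 x, hs2 (fun _ => 0), hEin1 x i k, hEin1 x i l, hEin1 x j l, hEin1 x j k] at hW
    field_simp at hW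
    have hK1p : K1 * (((d₁:ℝ)+(d₂:ℝ)-2) * (2*((d₁:ℝ)+(d₂:ℝ)-1)))
        = 2*(2*((d₁:ℝ)+(d₂:ℝ)-1)*c₁ - (s1c+s2c)) := by
      rw [hK1]; field_simp
    have hC : ((d₁:ℝ)+(d₂:ℝ)-2) * (2*((d₁:ℝ)+(d₂:ℝ)-1)) ≠ 0 := by
      refine mul_ne_zero hne2 ?_
      intro h; apply hne1; linarith
    apply mul_left_cancel₀ hC
    linear_combination hW - (g₁ x j k * g₁ x i l - g₁ x i k * g₁ x j l) * hK1p
  · intro y i j k l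
    have hW := hflat (Sum.elim (fun _ => 0) y) (Sum.inr i) (Sum.inr j) (Sum.inr k) (Sum.inr l)
    unfold weyl schouten at hW
    simp only [rlow_rr hsm₁ hsm₂ hginv₂, ricci_rr hsm₁ hsm₂ hginv₂,
      scalar_prod hsm₁ hsm₂ hginv₁ hginv₂, prodMetric_rr,
      Sum.elim_comp_inl, Sum.elim_comp_inr, Fintype.card_sum, Fintype.card_fin,
      Nat.cast_add] at hW
    rw [hs2 y, hs1 (fun _ => 0), hEin2 y i k, hEin2 y i l, hEin2 y j l, hEin2 y j k] at hW
    field_simp at hW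
    have hK2p : K2 * (((d₁:ℝ)+(d₂:ℝ)-2) * (2*((d₁:ℝ)+(d₂:ℝ)-1)))
        = 2*(2*((d₁:ℝ)+(d₂:ℝ)-1)*c₂ - (s1c+s2c)) := by
      rw [hK2]; field_simp
    have hC : ((d₁:ℝ)+(d₂:ℝ)-2) * (2*((d₁:ℝ)+(d₂:ℝ)-1)) ≠ 0 := by
      refine mul_ne_zero hne2 ?_
      intro h; apply hne1; linarith
    apply mul_left_cancel₀ hC
    linear_combination hW - (g₂ y j k * g₂ y i l - g₂ y i k * g₂ y j l) * hK2p
  · have hK1p : K1 * (((d₁:ℝ)+(d₂:ℝ)-2) * (2*((d₁:ℝ)+(d₂:ℝ)-1)))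
        = 2*(2*((d₁:ℝ)+(d₂:ℝ)-1)*c₁ - (s1c+s2c)) := by
      rw [hK1]; field_simp
    have hK2p : K2 * (((d₁:ℝ)+(d₂:ℝ)-2) * (2*((d₁:ℝ)+(d₂:ℝ)-1)))
        = 2*(2*((d₁:ℝ)+(d₂:ℝ)-1)*c₂ - (s1c+s2c)) := by
      rw [hK2]; field_simp
    have hc₁p : c₁ * ((d₂:ℝ) * ((d₁:ℝ)+(d₂:ℝ)-1))
        = (s1c+s2c)*(d₂:ℝ) - ((d₁:ℝ)+(d₂:ℝ)-1)*s2c := by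
      rw [hc₁]; field_simp
    have hc₂p : c₂ * ((d₁:ℝ) * ((d₁:ℝ)+(d₂:ℝ)-1))
        = (s1c+s2c)*(d₁:ℝ) - ((d₁:ℝ)+(d₂:ℝ)-1)*s1c := by
      rw [hc₂]; field_simp
    have hC : (((d₁:ℝ)+(d₂:ℝ)-2) * (2*((d₁:ℝ)+(d₂:ℝ)-1)))
        * ((d₁:ℝ) * (d₂:ℝ) * (((d₁:ℝ)+(d₂:ℝ))-1)) ≠ 0 := by
      refine mul_ne_zero (mul_ne_zero hne2 ?_) (mul_ne_zero (mul_ne_zero hD1ne hD2ne) hne1)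
      intro h; apply hne1; linarith
    apply mul_left_cancel₀ hC
    linear_combination ((d₁:ℝ)*(d₂:ℝ)*(((d₁:ℝ)+(d₂:ℝ))-1)) * hK1p
      + ((d₁:ℝ)*(d₂:ℝ)*(((d₁:ℝ)+(d₂:ℝ))-1)) * hK2p
      + (4*(((d₁:ℝ)+(d₂:ℝ))-1)*(d₁:ℝ)) * hc₁p
      + (4*(((d₁:ℝ)+(d₂:ℝ))-1)*(d₂:ℝ)) * hc₂p
      - (4*(((d₁:ℝ)+(d₂:ℝ))-1)) * hdag0
end
end

section
/- The Lorentzian metric g = 2dv du + Σᵢ₌₁ⁿ (dxⁱ)² + a(u)·Σᵢ(xⁱ)²·(du)² on ℝⁿ⁺², with a smooth function a(u), is conformally flat (its Weyl tensor vanishes). -/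
noncomputable section
open scoped BigOperators

variable {ι : Type*} [Fintype ι] [DecidableEq ι]

/-- The embedding of the middle (spacelike) coordinates `x¹,…,xⁿ` into the
`n+2` coordinates `(v, x¹, …, xⁿ, u)`. -/
def mid {n : ℕ} (i : Fin n) : Fin (n + 2) := ⟨i.1 + 1, by omega⟩

/-- The pp-wave metric `g = 2dvdu + Σᵢ(dxⁱ)² + a(u)·Σᵢ(xⁱ)²·(du)²` on `ℝⁿ⁺²`. -/
def ppMetric {n : ℕ} (a : ℝ → ℝ) (p : Fin (n + 2) → ℝ) (i j : Fin (n + 2)) : ℝ :=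
  (if i = 0 ∧ j = Fin.last (n + 1) then 1 else 0)
  + (if i = Fin.last (n + 1) ∧ j = 0 then 1 else 0)
  + (∑ k : Fin n, if i = mid k ∧ j = mid k then 1 else 0)
  + (if i = Fin.last (n + 1) ∧ j = Fin.last (n + 1) then
      a (p (Fin.last (n + 1))) * ∑ k : Fin n, (p (mid k))^2 else 0)

/-- The inverse of the pp-wave metric. -/
def ppMetricInv {n : ℕ} (a : ℝ → ℝ) (p : Fin (n + 2) → ℝ) (i j : Fin (n + 2)) : ℝ :=
  (if i = 0 ∧ j = Fin.last (n + 1) then 1 else 0)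
  + (if i = Fin.last (n + 1) ∧ j = 0 then 1 else 0)
  + (∑ k : Fin n, if i = mid k ∧ j = mid k then 1 else 0)
  + (if i = 0 ∧ j = 0 then
      -(a (p (Fin.last (n + 1))) * ∑ k : Fin n, (p (mid k))^2) else 0)

set_option linter.unusedSectionVars false
set_option linter.unnecessarySeqFocus false
set_option linter.unreachableTactic false
set_option linter.unusedTactic false

lemma pd_add (i : ι) {f g : (ι → ℝ) → ℝ} {x : ι → ℝ}
    (hf : DifferentiableAt ℝ f x) (hg : DifferentiableAt ℝ g x) :
    pd i (fun y => f y + g y) x = pd i f x + pd i g x := by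
  simp [pd, fderiv_fun_add hf hg]

lemma pd_sub (i : ι) {f g : (ι → ℝ) → ℝ} {x : ι → ℝ}
    (hf : DifferentiableAt ℝ f x) (hg : DifferentiableAt ℝ g x) :
    pd i (fun y => f y - g y) x = pd i f x - pd i g x := by
  simp [pd, fderiv_fun_sub hf hg]

lemma pd_const_mul (i : ι) {f : (ι → ℝ) → ℝ} {x : ι → ℝ}
    (hf : DifferentiableAt ℝ f x) (c : ℝ) :
    pd i (fun y => c * f y) x = c * pd i f x := by
  simp [pd, fderiv_const_mul hf c]

lemma pd_mul (i : ι) {f g : (ι → ℝ) → ℝ} {x : ι → ℝ}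
    (hf : DifferentiableAt ℝ f x) (hg : DifferentiableAt ℝ g x) :
    pd i (fun y => f y * g y) x = pd i f x * g x + f x * pd i g x := by
  simp [pd, fderiv_fun_mul hf hg]; ring

lemma pd_sum (i : ι) {κ : Type*} (s : Finset κ) {F : κ → (ι → ℝ) → ℝ} {x : ι → ℝ}
    (hF : ∀ k ∈ s, DifferentiableAt ℝ (F k) x) :
    pd i (fun y => ∑ k ∈ s, F k y) x = ∑ k ∈ s, pd i (F k) x := by
  simp [pd, fderiv_fun_sum hF]

lemma pd_ite (i : ι) (P : Prop) [Decidable P] (f : (ι → ℝ) → ℝ) (x : ι → ℝ) :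
    pd i (fun y => if P then f y else 0) x = if P then pd i f x else 0 := by
  split <;> simp [pd]

lemma differentiable_proj (j : ι) : Differentiable ℝ (fun y : ι → ℝ => y j) :=
  (ContinuousLinearMap.proj j : (ι → ℝ) →L[ℝ] ℝ).differentiable

lemma pd_proj (i j : ι) (x : ι → ℝ) :
    pd i (fun y => y j) x = if j = i then 1 else 0 := by
  have : fderiv ℝ (fun y : ι → ℝ => y j) x = (ContinuousLinearMap.proj j : (ι → ℝ) →L[ℝ] ℝ) :=
    (ContinuousLinearMap.proj j : (ι → ℝ) →L[ℝ] ℝ).fderiv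
  simp [pd, this, Pi.single_apply]

lemma pd_comp_s12 (i j : ι) (h : ℝ → ℝ) (x : ι → ℝ) (hh : DifferentiableAt ℝ h (x j)) :
    pd i (fun y => h (y j)) x = deriv h (x j) * (if j = i then 1 else 0) := by
  have H : HasFDerivAt (fun y : ι → ℝ => h (y j))
      (deriv h (x j) • (ContinuousLinearMap.proj j : (ι → ℝ) →L[ℝ] ℝ)) x :=
    hh.hasDerivAt.comp_hasFDerivAt x
      (ContinuousLinearMap.proj j : (ι → ℝ) →L[ℝ] ℝ).hasFDerivAt
  simp [pd, H.fderiv, Pi.single_apply]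


-- index lemmas
variable {n : ℕ}

@[simp] lemma mid_eq_zero_iff (k : Fin n) : (mid k = (0 : Fin (n+2))) ↔ False := by
  simp [mid, Fin.ext_iff]

@[simp] lemma zero_eq_mid_iff (k : Fin n) : ((0 : Fin (n+2)) = mid k) ↔ False := by
  simp [mid, Fin.ext_iff]

@[simp] lemma mid_eq_last_iff (k : Fin n) : (mid k = Fin.last (n+1)) ↔ False := by
  simp [mid, Fin.ext_iff]; omega

@[simp] lemma last_eq_mid_iff (k : Fin n) : (Fin.last (n+1) = mid k) ↔ False := by
  simp [mid, Fin.ext_iff]; omega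

@[simp] lemma zero_eq_last_iff : ((0 : Fin (n+2)) = Fin.last (n+1)) ↔ False := by
  simp [Fin.ext_iff]

@[simp] lemma last_eq_zero_iff : (Fin.last (n+1) = (0 : Fin (n+2))) ↔ False := by
  simp [Fin.ext_iff]

@[simp] lemma mid_inj_iff (k l : Fin n) : (mid k = mid l) ↔ k = l := by
  simp [mid, Fin.ext_iff]

lemma cases3 (i : Fin (n+2)) : i = 0 ∨ (∃ k : Fin n, i = mid k) ∨ i = Fin.last (n+1) := by
  have hv := i.2
  rcases eq_or_ne i.1 0 with h | h
  · left; exact Fin.ext (by simpa using h)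
  · rcases eq_or_ne i.1 (n+1) with h2 | h2
    · right; right; exact Fin.ext (by simpa using h2)
    · right; left; exact ⟨⟨i.1-1, by omega⟩, Fin.ext (by simp [mid]; omega)⟩

lemma sum_split (f : Fin (n+2) → ℝ) :
    ∑ i, f i = f 0 + (∑ k : Fin n, f (mid k)) + f (Fin.last (n+1)) := by
  rw [Fin.sum_univ_succ, Fin.sum_univ_castSucc]
  have h1 : ∀ k : Fin n, (k.castSucc).succ = mid k := fun k => Fin.ext (by simp [mid])
  have h2 : (Fin.last n).succ = Fin.last (n+1) := Fin.ext (by simp)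
  simp only [h1, h2]; ring

def Svar (n : ℕ) (p : Fin (n+2) → ℝ) : ℝ := ∑ k : Fin n, (p (mid k))^2

def Hfun (n : ℕ) (a : ℝ → ℝ) (p : Fin (n+2) → ℝ) : ℝ := a (p (Fin.last (n+1))) * Svar n p

def Dfun (n : ℕ) (a : ℝ → ℝ) (i : Fin (n+2)) (p : Fin (n+2) → ℝ) : ℝ :=
  (if Fin.last (n+1) = i then deriv a (p (Fin.last (n+1))) * Svar n p else 0)
  + a (p (Fin.last (n+1))) * ∑ k : Fin n, (if mid k = i then 2 * p (mid k) else 0)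

def D2fun (n : ℕ) (a : ℝ → ℝ) (i j : Fin (n+2)) (p : Fin (n+2) → ℝ) : ℝ :=
  (if Fin.last (n+1) = j then
     deriv (deriv a) (p (Fin.last (n+1))) * Svar n p * (if Fin.last (n+1) = i then 1 else 0)
     + deriv a (p (Fin.last (n+1))) * ∑ k : Fin n, (if mid k = i then 2 * p (mid k) else 0)
   else 0)
  + deriv a (p (Fin.last (n+1))) * (if Fin.last (n+1) = i then 1 else 0) *
      (∑ k : Fin n, (if mid k = j then 2 * p (mid k) else 0))
  + a (p (Fin.last (n+1))) * ∑ k : Fin n, (if mid k = j then 2 * (if mid k = i then 1 else 0) else 0)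

lemma diff_Svar : Differentiable ℝ (Svar n) :=
  Differentiable.fun_sum fun k _ => (differentiable_proj (mid k)).pow 2

lemma diff_comp_last {h : ℝ → ℝ} (hh : Differentiable ℝ h) :
    Differentiable ℝ (fun p : Fin (n+2) → ℝ => h (p (Fin.last (n+1)))) :=
  hh.comp (differentiable_proj _)

lemma diff_ite (P : Prop) [Decidable P] {f : (ι → ℝ) → ℝ} (hf : Differentiable ℝ f) :
    Differentiable ℝ (fun y => if P then f y else 0) := by
  split
  · exact hf
  · exact differentiable_const 0

lemma diff_Hfun {a : ℝ → ℝ} (hd : Differentiable ℝ a) : Differentiable ℝ (Hfun n a) :=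
  (diff_comp_last hd).mul diff_Svar

lemma diff_Dfun {a : ℝ → ℝ} (hd : Differentiable ℝ a) (hd' : Differentiable ℝ (deriv a))
    (i : Fin (n+2)) : Differentiable ℝ (Dfun n a i) := by
  refine Differentiable.add (diff_ite _ ((diff_comp_last hd').mul diff_Svar)) ?_
  exact (diff_comp_last hd).mul (Differentiable.fun_sum fun k _ =>
    diff_ite _ ((differentiable_const 2).mul (differentiable_proj (mid k))))

lemma pd_sq (i j : Fin (n+2)) (x : Fin (n+2) → ℝ) :
    pd i (fun y => (y j)^2) x = 2 * x j * (if j = i then 1 else 0) := by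
  have h : (fun y : Fin (n+2) → ℝ => (y j)^2) = fun y => y j * y j := by
    funext y; ring
  rw [h, pd_mul i (differentiable_proj j x) (differentiable_proj j x), pd_proj]
  ring

lemma pd_Svar (i : Fin (n+2)) (p : Fin (n+2) → ℝ) :
    pd i (Svar n) p = ∑ k : Fin n, (if mid k = i then 2 * p (mid k) else 0) := by
  unfold Svar
  rw [pd_sum i Finset.univ (fun k _ => ((differentiable_proj (mid k)).fun_pow 2).differentiableAt)]
  refine Finset.sum_congr rfl fun k _ => ?_
  rw [pd_sq]
  split <;> ring

lemma pd_comp_last {a : ℝ → ℝ} (hd : Differentiable ℝ a) (i : Fin (n+2)) (p : Fin (n+2) → ℝ) :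
    pd i (fun y => a (y (Fin.last (n+1)))) p
      = deriv a (p (Fin.last (n+1))) * (if Fin.last (n+1) = i then 1 else 0) :=
  pd_comp_s12 i (Fin.last (n+1)) a p (hd _)

lemma pd_Hfun {a : ℝ → ℝ} (hd : Differentiable ℝ a) (i : Fin (n+2)) (p : Fin (n+2) → ℝ) :
    pd i (Hfun n a) p = Dfun n a i p := by
  unfold Hfun Dfun
  rw [pd_mul i ((diff_comp_last hd) p) (diff_Svar p), pd_comp_last hd, pd_Svar]
  split <;> ring

lemma pd_Dfun {a : ℝ → ℝ} (hd : Differentiable ℝ a) (hd' : Differentiable ℝ (deriv a))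
    (i j : Fin (n+2)) (p : Fin (n+2) → ℝ) :
    pd i (Dfun n a j) p = D2fun n a i j p := by
  unfold Dfun D2fun
  rw [pd_add i ((diff_ite _ ((diff_comp_last hd').fun_mul diff_Svar)) p)
      (((diff_comp_last hd).fun_mul (Differentiable.fun_sum fun k _ =>
        diff_ite _ ((differentiable_const 2).fun_mul (differentiable_proj (mid k))))) p),
    pd_ite, pd_mul i ((diff_comp_last hd') p) (diff_Svar p), pd_comp_last hd', pd_Svar,
    pd_mul i ((diff_comp_last hd) p) ((Differentiable.fun_sum fun k _ =>
        diff_ite _ ((differentiable_const 2).fun_mul (differentiable_proj (mid k)))) p),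
    pd_comp_last hd,
    pd_sum i Finset.univ (fun k _ =>
      (diff_ite _ ((differentiable_const 2).fun_mul (differentiable_proj (mid k)))).differentiableAt)]
  have hsum : ∀ k : Fin n, pd i (fun y => if mid k = j then 2 * y (mid k) else 0) p
      = (if mid k = j then 2 * (if mid k = i then 1 else 0) else 0) := by
    intro k
    rw [pd_ite, pd_const_mul i (differentiable_proj (mid k) p), pd_proj]
  simp only [hsum]
  split <;> ring

-- value lemmas
variable {a : ℝ → ℝ}

@[simp] lemma Dfun_zero (p : Fin (n+2) → ℝ) : Dfun n a 0 p = 0 := by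
  simp [Dfun]

@[simp] lemma Dfun_mid (s : Fin n) (p : Fin (n+2) → ℝ) :
    Dfun n a (mid s) p = a (p (Fin.last (n+1))) * (2 * p (mid s)) := by
  simp [Dfun]

@[simp] lemma Dfun_last (p : Fin (n+2) → ℝ) :
    Dfun n a (Fin.last (n+1)) p = deriv a (p (Fin.last (n+1))) * Svar n p := by
  simp [Dfun]

@[simp] lemma D2fun_zero_left (j : Fin (n+2)) (p : Fin (n+2) → ℝ) : D2fun n a 0 j p = 0 := by
  simp [D2fun]

@[simp] lemma D2fun_zero_right (i : Fin (n+2)) (p : Fin (n+2) → ℝ) : D2fun n a i 0 p = 0 := by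
  simp [D2fun]

@[simp] lemma D2fun_mid_mid (s t : Fin n) (p : Fin (n+2) → ℝ) :
    D2fun n a (mid s) (mid t) p = if t = s then a (p (Fin.last (n+1))) * 2 else 0 := by
  simp [D2fun]

@[simp] lemma D2fun_last_mid (t : Fin n) (p : Fin (n+2) → ℝ) :
    D2fun n a (Fin.last (n+1)) (mid t) p
      = deriv a (p (Fin.last (n+1))) * (2 * p (mid t)) := by
  simp [D2fun]

@[simp] lemma D2fun_mid_last (s : Fin n) (p : Fin (n+2) → ℝ) :
    D2fun n a (mid s) (Fin.last (n+1)) p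
      = deriv a (p (Fin.last (n+1))) * (2 * p (mid s)) := by
  simp [D2fun]

@[simp] lemma D2fun_last_last (p : Fin (n+2) → ℝ) :
    D2fun n a (Fin.last (n+1)) (Fin.last (n+1)) p
      = deriv (deriv a) (p (Fin.last (n+1))) * Svar n p := by
  simp [D2fun]

lemma sum_ite_mid (i : Fin (n+2)) (m : Fin n) (c : Fin n → ℝ) :
    ∑ k : Fin n, (if i = mid k ∧ mid m = mid k then c k else 0)
      = if i = mid m then c m else 0 := by
  rw [Finset.sum_eq_single m]
  · simp
  · intro k _ hk
    have : ¬ (mid m = mid k) := by simp [mid_inj_iff]; exact fun h => hk h.symm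
    simp [this]
  · simp

variable {a : ℝ → ℝ}

lemma g_zero (p : Fin (n+2) → ℝ) (i : Fin (n+2)) :
    ppMetric a p i 0 = if i = Fin.last (n+1) then 1 else 0 := by
  simp [ppMetric]

lemma g_mid (p : Fin (n+2) → ℝ) (i : Fin (n+2)) (m : Fin n) :
    ppMetric a p i (mid m) = if i = mid m then 1 else 0 := by
  simp only [ppMetric, mid_eq_last_iff, and_false, if_false, mid_eq_zero_iff, add_zero,
    zero_add, sum_ite_mid]

lemma g_last (p : Fin (n+2) → ℝ) (i : Fin (n+2)) :
    ppMetric a p i (Fin.last (n+1)) =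
      (if i = 0 then 1 else 0) + (if i = Fin.last (n+1) then Hfun n a p else 0) := by
  simp [ppMetric, Hfun, Svar]

lemma ginv_zero (p : Fin (n+2) → ℝ) (k : Fin (n+2)) :
    ppMetricInv a p k 0 = (if k = Fin.last (n+1) then 1 else 0)
      + (if k = 0 then -(Hfun n a p) else 0) := by
  simp [ppMetricInv, Hfun, Svar]

lemma ginv_mid (p : Fin (n+2) → ℝ) (k : Fin (n+2)) (m : Fin n) :
    ppMetricInv a p k (mid m) = if k = mid m then 1 else 0 := by
  simp only [ppMetricInv, mid_eq_last_iff, and_false, if_false, mid_eq_zero_iff, add_zero,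
    zero_add, sum_ite_mid]

lemma ginv_last (p : Fin (n+2) → ℝ) (k : Fin (n+2)) :
    ppMetricInv a p k (Fin.last (n+1)) = if k = 0 then 1 else 0 := by
  simp [ppMetricInv]

def Gam (n : ℕ) (a : ℝ → ℝ) (k i j : Fin (n+2)) (p : Fin (n+2) → ℝ) : ℝ :=
  (1/2) * ((if k = 0 then
      (if j = Fin.last (n+1) then Dfun n a i p else 0)
      + (if i = Fin.last (n+1) then Dfun n a j p else 0)
      - (if i = Fin.last (n+1) ∧ j = Fin.last (n+1) then Dfun n a (Fin.last (n+1)) p else 0)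
    else 0)
  - (if i = Fin.last (n+1) ∧ j = Fin.last (n+1) then
      ∑ m : Fin n, (if k = mid m then Dfun n a (mid m) p else 0) else 0))

def Gam2 (n : ℕ) (a : ℝ → ℝ) (d k i j : Fin (n+2)) (p : Fin (n+2) → ℝ) : ℝ :=
  (1/2) * ((if k = 0 then
      (if j = Fin.last (n+1) then D2fun n a d i p else 0)
      + (if i = Fin.last (n+1) then D2fun n a d j p else 0)
      - (if i = Fin.last (n+1) ∧ j = Fin.last (n+1) then D2fun n a d (Fin.last (n+1)) p else 0)
    else 0)
  - (if i = Fin.last (n+1) ∧ j = Fin.last (n+1) then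
      ∑ m : Fin n, (if k = mid m then D2fun n a d (mid m) p else 0) else 0))

lemma pd_g (hd : Differentiable ℝ a) (m i j : Fin (n+2)) (p : Fin (n+2) → ℝ) :
    pd m (fun y => ppMetric a y i j) p
      = if i = Fin.last (n+1) ∧ j = Fin.last (n+1) then Dfun n a m p else 0 := by
  by_cases h : i = Fin.last (n+1) ∧ j = Fin.last (n+1)
  · obtain ⟨rfl, rfl⟩ := h
    have e : (fun y => ppMetric a y (Fin.last (n+1)) (Fin.last (n+1))) = Hfun n a := by
      funext y; simp [ppMetric, Hfun, Svar]
    rw [e, pd_Hfun hd, if_pos ⟨rfl, rfl⟩]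
  · have e : (fun y => ppMetric a y i j) = fun _ =>
        ((if i = 0 ∧ j = Fin.last (n + 1) then (1:ℝ) else 0)
        + (if i = Fin.last (n + 1) ∧ j = 0 then 1 else 0)
        + (∑ k : Fin n, if i = mid k ∧ j = mid k then 1 else 0)) := by
      funext y; simp [ppMetric, h]
    rw [e, pd_const, if_neg h]

lemma christoffel_eq (hd : Differentiable ℝ a) (k i j : Fin (n+2)) (p : Fin (n+2) → ℝ) :
    christoffel (ppMetric a) (ppMetricInv a) k i j p = Gam n a k i j p := by
  unfold christoffel
  simp only [pd_g hd]
  rw [sum_split]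
  by_cases hi : i = Fin.last (n+1) <;> by_cases hj : j = Fin.last (n+1) <;>
    simp [Gam, hi, hj, ginv_zero, ginv_mid, ginv_last] <;> ring

lemma pdGam (hd : Differentiable ℝ a) (hd' : Differentiable ℝ (deriv a))
    (d k i j : Fin (n+2)) (p : Fin (n+2) → ℝ) :
    pd d (Gam n a k i j) p = Gam2 n a d k i j p := by
  have dD : ∀ x : Fin (n+2), Differentiable ℝ (Dfun n a x) := diff_Dfun hd hd'
  have dX : Differentiable ℝ (fun q =>
      (if j = Fin.last (n+1) then Dfun n a i q else 0)
      + (if i = Fin.last (n+1) then Dfun n a j q else 0)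
      - (if i = Fin.last (n+1) ∧ j = Fin.last (n+1) then Dfun n a (Fin.last (n+1)) q else 0)) :=
    ((diff_ite _ (dD i)).add (diff_ite _ (dD j))).sub (diff_ite _ (dD _))
  have dX' : Differentiable ℝ (fun q => if k = 0 then
      (if j = Fin.last (n+1) then Dfun n a i q else 0)
      + (if i = Fin.last (n+1) then Dfun n a j q else 0)
      - (if i = Fin.last (n+1) ∧ j = Fin.last (n+1) then Dfun n a (Fin.last (n+1)) q else 0)
    else 0) := diff_ite _ dX
  have dY : Differentiable ℝ (fun q => if i = Fin.last (n+1) ∧ j = Fin.last (n+1) then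
      ∑ m : Fin n, (if k = mid m then Dfun n a (mid m) q else 0) else 0) :=
    diff_ite _ (Differentiable.fun_sum fun m _ => diff_ite _ (dD (mid m)))
  unfold Gam Gam2
  rw [pd_const_mul d ((dX'.fun_sub dY) p), pd_sub d (dX' p) (dY p), pd_ite, pd_ite,
    pd_sub d (((diff_ite _ (dD i)).fun_add (diff_ite _ (dD j))) p) ((diff_ite _ (dD _)) p),
    pd_add d ((diff_ite _ (dD i)) p) ((diff_ite _ (dD j)) p), pd_ite, pd_ite, pd_ite,
    pd_sum d Finset.univ (fun m _ => (diff_ite _ (dD (mid m))).differentiableAt)]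
  simp only [pd_ite, pd_Dfun hd hd']

@[simp] lemma Gam_up_last (i j : Fin (n+2)) (p : Fin (n+2) → ℝ) :
    Gam n a (Fin.last (n+1)) i j p = 0 := by
  simp [Gam]

@[simp] lemma Gam_low0 (k i : Fin (n+2)) (p : Fin (n+2) → ℝ) :
    Gam n a k i 0 p = 0 := by
  simp [Gam]

lemma Gam_low_mid (k i : Fin (n+2)) (t : Fin n) (p : Fin (n+2) → ℝ) :
    Gam n a k i (mid t) p
      = if k = 0 ∧ i = Fin.last (n+1) then (1/2) * Dfun n a (mid t) p else 0 := by
  simp [Gam]; split_ifs <;> simp_all <;> ring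

lemma Gam_up_mid (t : Fin n) (i j : Fin (n+2)) (p : Fin (n+2) → ℝ) :
    Gam n a (mid t) i j p
      = if i = Fin.last (n+1) ∧ j = Fin.last (n+1) then -(1/2) * Dfun n a (mid t) p else 0 := by
  simp only [Gam, mid_eq_zero_iff, if_false]
  split_ifs with h
  · rw [Finset.sum_eq_single t] <;> simp_all
    · intro k hk; have : ¬ ((t:Fin n) = k) := fun hh => hk hh.symm
      simp [mid_inj_iff, this]
  · ring

@[simp] lemma Gam2_up_last (d i j : Fin (n+2)) (p : Fin (n+2) → ℝ) :
    Gam2 n a d (Fin.last (n+1)) i j p = 0 := by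
  simp [Gam2]

@[simp] lemma Gam2_d0 (k i j : Fin (n+2)) (p : Fin (n+2) → ℝ) :
    Gam2 n a 0 k i j p = 0 := by
  simp [Gam2]

lemma Gam2_up_mid (d : Fin (n+2)) (t : Fin n) (i j : Fin (n+2)) (p : Fin (n+2) → ℝ) :
    Gam2 n a d (mid t) i j p
      = if i = Fin.last (n+1) ∧ j = Fin.last (n+1) then -(1/2) * D2fun n a d (mid t) p else 0 := by
  simp only [Gam2, mid_eq_zero_iff, if_false]
  split_ifs with h
  · rw [Finset.sum_eq_single t] <;> simp_all
    · intro k hk; have : ¬ ((t:Fin n) = k) := fun hh => hk hh.symm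
      simp [mid_inj_iff, this]
  · ring

lemma Gam2_up0 (d i j : Fin (n+2)) (p : Fin (n+2) → ℝ) :
    Gam2 n a d 0 i j p = (1/2) * ((if j = Fin.last (n+1) then D2fun n a d i p else 0)
      + (if i = Fin.last (n+1) then D2fun n a d j p else 0)
      - (if i = Fin.last (n+1) ∧ j = Fin.last (n+1) then D2fun n a d (Fin.last (n+1)) p else 0)) := by
  simp [Gam2]

lemma riemann_eq (hd : Differentiable ℝ a) (hd' : Differentiable ℝ (deriv a))
    (l k i j : Fin (n+2)) (p : Fin (n+2) → ℝ) :
    riemann (ppMetric a) (ppMetricInv a) l k i j p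
      = Gam2 n a i l j k p - Gam2 n a j l i k p := by
  have hc : ∀ (k' i' j' : Fin (n+2)), christoffel (ppMetric a) (ppMetricInv a) k' i' j'
      = Gam n a k' i' j' := fun k' i' j' => funext (christoffel_eq hd k' i' j')
  unfold riemann
  simp only [hc, pdGam hd hd']
  have hq : ∀ i' j' : Fin (n+2), ∑ m, Gam n a l i' m p * Gam n a m j' k p
      = (if l = 0 ∧ i' = Fin.last (n+1) ∧ j' = Fin.last (n+1) ∧ k = Fin.last (n+1) then
          -(1/4) * ∑ t : Fin n, Dfun n a (mid t) p * Dfun n a (mid t) p else 0) := by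
    intro i' j'
    rw [sum_split]
    simp only [Gam_low0, Gam_up_last, Gam_low_mid, Gam_up_mid, zero_mul, mul_zero, add_zero,
      zero_add]
    by_cases h1 : l = 0 <;> by_cases h2 : i' = Fin.last (n+1) <;>
      by_cases h3 : j' = Fin.last (n+1) <;> by_cases h4 : k = Fin.last (n+1) <;>
      simp [h1, h2, h3, h4, Finset.mul_sum] <;> ring_nf <;>
      try (refine Finset.sum_congr rfl fun t _ => by ring)
  rw [hq, hq]
  by_cases h1 : l = 0 <;> by_cases h2 : i = Fin.last (n+1) <;>
    by_cases h3 : j = Fin.last (n+1) <;> by_cases h4 : k = Fin.last (n+1) <;>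
    simp [h1, h2, h3, h4] <;> ring

lemma ricci_eq (hd : Differentiable ℝ a) (hd' : Differentiable ℝ (deriv a))
    (k j : Fin (n+2)) (p : Fin (n+2) → ℝ) :
    ricci (ppMetric a) (ppMetricInv a) k j p
      = if j = Fin.last (n+1) ∧ k = Fin.last (n+1) then
          -((n:ℝ) * a (p (Fin.last (n+1)))) else 0 := by
  unfold ricci
  simp only [riemann_eq hd hd']
  rw [sum_split]
  by_cases h : j = Fin.last (n+1) ∧ k = Fin.last (n+1) <;>
    simp [h, Gam2_up0, Gam2_up_mid, Finset.sum_sub_distrib, mul_comm]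

lemma scalar_eq (hd : Differentiable ℝ a) (hd' : Differentiable ℝ (deriv a))
    (p : Fin (n+2) → ℝ) :
    scalarCurv (ppMetric a) (ppMetricInv a) p = 0 := by
  unfold scalarCurv
  simp only [ricci_eq hd hd']
  rw [sum_split]
  simp [sum_split, ginv_zero, ginv_mid, ginv_last, ppMetricInv]

lemma schouten_eq (hd : Differentiable ℝ a) (hd' : Differentiable ℝ (deriv a))
    (hn : (n:ℝ) ≠ 0) (i j : Fin (n+2)) (p : Fin (n+2) → ℝ) :
    schouten (ppMetric a) (ppMetricInv a) i j p
      = if i = Fin.last (n+1) ∧ j = Fin.last (n+1) then -(a (p (Fin.last (n+1)))) else 0 := by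
  unfold schouten
  rw [scalar_eq hd hd', ricci_eq hd hd']
  have hcard : (Fintype.card (Fin (n+2)) : ℝ) = (n:ℝ) + 2 := by simp
  rw [hcard]
  by_cases h : i = Fin.last (n+1) ∧ j = Fin.last (n+1)
  · have h' : j = Fin.last (n+1) ∧ i = Fin.last (n+1) := ⟨h.2, h.1⟩
    rw [if_pos h', if_pos h]
    field_simp
    ring_nf
    rw [mul_comm (n:ℝ) (a _), mul_inv_cancel_right₀ hn]
  · have h' : ¬ (j = Fin.last (n+1) ∧ i = Fin.last (n+1)) := fun hh => h ⟨hh.2, hh.1⟩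
    rw [if_neg h', if_neg h]
    simp

lemma riemannLow_eq (hd : Differentiable ℝ a) (hd' : Differentiable ℝ (deriv a))
    (i j k l : Fin (n+2)) (p : Fin (n+2) → ℝ) :
    riemannLow (ppMetric a) (ppMetricInv a) i j k l p
      = (if l = Fin.last (n+1) then Gam2 n a i 0 j k p - Gam2 n a j 0 i k p else 0)
        + ∑ t : Fin n, (if l = mid t then
            Gam2 n a i (mid t) j k p - Gam2 n a j (mid t) i k p else 0) := by
  unfold riemannLow
  simp only [riemann_eq hd hd']
  rw [sum_split]
  simp only [g_zero, g_mid, g_last, Gam2_up_last, sub_zero, sub_self, mul_zero, add_zero,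
    ite_mul, one_mul, zero_mul]

/-- the pp-wave metric `g = 2dvdu + Σ(dxⁱ)² + a(u)Σ(xⁱ)²(du)²`
on `ℝⁿ⁺²` is conformally flat: its Weyl tensor vanishes. -/
theorem stmt12 {n : ℕ} (hn : 2 ≤ n) (a : ℝ → ℝ) (ha : ContDiff ℝ (⊤ : ℕ∞) a) :
    ∀ (p : Fin (n + 2) → ℝ) (i j k l : Fin (n + 2)),
      weyl (ppMetric a) (ppMetricInv a) i j k l p = 0 := by
  have hd : Differentiable ℝ a := ha.differentiable (by simp)
  have ha' : ContDiff ℝ ((⊤:ℕ∞):WithTop ℕ∞) a := ha.of_le (by simp)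
  have hd' : Differentiable ℝ (deriv a) :=
    (contDiff_infty_iff_deriv.mp ha').2.differentiable (by simp)
  have hnn : (n:ℝ) ≠ 0 := Nat.cast_ne_zero.mpr (by omega)
  intro p i j k l
  unfold weyl
  rw [riemannLow_eq hd hd']
  simp only [schouten_eq hd hd' hnn]
  rcases cases3 i with rfl | ⟨s1, rfl⟩ | rfl <;>
  rcases cases3 j with rfl | ⟨s2, rfl⟩ | rfl <;>
  rcases cases3 k with rfl | ⟨s3, rfl⟩ | rfl <;>
  rcases cases3 l with rfl | ⟨s4, rfl⟩ | rfl <;>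
  simp [Gam2_up0, Gam2_up_mid, g_zero, g_mid, g_last, Hfun, Svar, mul_ite, ite_mul] <;>
  split_ifs <;> ring_nf <;> simp_all
end
end
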